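/- arXiv:1904.07565 — 9 statements merged into one kernel-verified Lean document; each statement's English description precedes it below -/
import Mathlib

section
/- Let (f,M) be a polymatroid and A a nonempty proper subset of M. Suppose the real number λ satisfies: λ ≤ f(x,y|B) for all distinct x,y ∈ A and all B ⊆ M∖A (including B = ∅), and λ ≤ f(x | M∖A) for every x ∈ A. Then f − λ·r_A is a polymatroid on M. -/
open Finset

noncomputable section

variable {α : Type*} [DecidableEq α]

/-- `f` is a polymatroid with ground set `M`: it vanishes on `∅` and is
non-negative, monotone and submodular on subsets of `M`. -/
def IsPolymatroid (M : Finset α) (f : Finset α → ℝ) : Prop :=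
  f ∅ = 0 ∧
  (∀ A, A ⊆ M → 0 ≤ f A) ∧
  (∀ A B, A ⊆ B → B ⊆ M → f A ≤ f B) ∧
  (∀ A B, A ⊆ M → B ⊆ M → f (A ∪ B) + f (A ∩ B) ≤ f A + f B)

/-- `pmi f I J K` is the expression `f(I,J|K) = f(I∪K)+f(J∪K)−f(I∪J∪K)−f(K)`. -/
def pmi (f : Finset α → ℝ) (I J K : Finset α) : ℝ :=
  f (I ∪ K) + f (J ∪ K) - f (I ∪ J ∪ K) - f K

/-- `pcd f I K` is the expression `f(I|K) = f(I∪K) − f(K)`. -/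
def pcd (f : Finset α → ℝ) (I K : Finset α) : ℝ := f (I ∪ K) - f K

/-- `runit A` is the rank function `r_A`: `r_A(I) = 1` if `A ∩ I ≠ ∅`, else `0`. -/
def runit (A I : Finset α) : ℝ := if (A ∩ I).Nonempty then 1 else 0

/-- Tightening of `f` at `a` (relative to ground set `M`):
`f↓a = f − f(a|M∖{a})·r_{{a}}`. -/
def tightenAt (M : Finset α) (f : Finset α → ℝ) (a : α) : Finset α → ℝ :=
  fun I => f I - pcd f {a} (M \ {a}) * runit {a} I

/-- if `λ ≤ f(x,y|B)` for all distinct `x,y ∈ A`, `B ⊆ M∖A`, and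
`λ ≤ f(x|M∖A)` for all `x ∈ A`, then `f − λ·r_A` is a polymatroid on `M`. -/
theorem statement_0 (M A : Finset α) (f : Finset α → ℝ) (lam : ℝ)
    (hf : IsPolymatroid M f) (hAne : A.Nonempty) (hAM : A ⊆ M) (hAproper : A ≠ M)
    (h1 : ∀ x ∈ A, ∀ y ∈ A, x ≠ y → ∀ B ⊆ M \ A, lam ≤ pmi f {x} {y} B)
    (h2 : ∀ x ∈ A, lam ≤ pcd f {x} (M \ A)) :
    IsPolymatroid M (fun I => f I - lam * runit A I) := by
  obtain ⟨h0, hnn, hmono, hsub⟩ := hf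
  -- pmi is monotone in the first argument
  have pmiL : ∀ I' I J K : Finset α, I' ⊆ I → I ⊆ M → J ⊆ M → K ⊆ M →
      pmi f I' J K ≤ pmi f I J K := by
    intro I' I J K hI' hI hJ hK
    have hsub' := hsub (I ∪ K) (I' ∪ J ∪ K) (union_subset hI hK)
      (union_subset (union_subset (hI'.trans hI) hJ) hK)
    have hu : (I ∪ K) ∪ (I' ∪ J ∪ K) = I ∪ J ∪ K := by
      ext a
      have : a ∈ I' → a ∈ I := fun h => hI' h
      simp only [mem_union]; tauto
    have hmono' : f (I' ∪ K) ≤ f ((I ∪ K) ∩ (I' ∪ J ∪ K)) := by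
      apply hmono
      · intro a ha
        have h2a : a ∈ I' → a ∈ I := fun h => hI' h
        simp only [mem_union, mem_inter] at ha ⊢; tauto
      · exact inter_subset_left.trans (union_subset hI hK)
    rw [hu] at hsub'
    simp only [pmi]; linarith
  have pmiComm : ∀ I J K : Finset α, pmi f I J K = pmi f J I K := by
    intro I J K
    simp only [pmi]
    rw [union_comm I J]; ring
  -- conditional value drops under larger conditioning
  have dimin : ∀ (x : α) (I : Finset α), x ∈ A → I ⊆ M → A ∩ I = ∅ →
      lam ≤ f (insert x I) - f I := by
    intro x I hxA hIM hAI
    have hxM : x ∈ M := hAM hxA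
    have hIMA : I ⊆ M \ A := by
      intro a ha
      simp only [mem_sdiff]
      refine ⟨hIM ha, fun haA => ?_⟩
      have : a ∈ A ∩ I := mem_inter.2 ⟨haA, ha⟩
      simp [hAI] at this
    have hsub' := hsub (insert x I) (M \ A)
      (insert_subset hxM hIM) (sdiff_subset)
    have hu : insert x I ∪ (M \ A) = {x} ∪ (M \ A) := by
      ext a
      have : a ∈ I → a ∈ M \ A := fun h => hIMA h
      simp only [mem_union, mem_insert, mem_singleton]; tauto
    have hi : insert x I ∩ (M \ A) = I := by
      ext a
      have h2a : a ∈ I → a ∈ M \ A := fun h => hIMA h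
      simp only [mem_inter, mem_insert, mem_sdiff] at *
      constructor
      · rintro ⟨h | h, hm, hna⟩
        · exact absurd (h ▸ hxA) hna
        · exact h
      · intro h
        obtain ⟨hm, hna⟩ := mem_sdiff.1 (hIMA h)
        exact ⟨Or.inr h, hm, hna⟩
    rw [hu, hi] at hsub'
    have := h2 x hxA
    simp only [pcd] at this
    linarith
  refine ⟨?_, ?_, ?_, ?_⟩
  · simp [runit, h0]
  · -- non-negativity
    intro I hIM
    show 0 ≤ f I - lam * runit A I
    by_cases hAI : (A ∩ I).Nonempty
    · obtain ⟨x, hx⟩ := hAI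
      have hxA : x ∈ A := (mem_inter.1 hx).1
      have hxI : x ∈ I := (mem_inter.1 hx).2
      have key : lam ≤ f {x} - f ∅ := by
        have := dimin x ∅ hxA (empty_subset M) (inter_empty A)
        simpa using this
      have hmx : f {x} ≤ f I := hmono _ _ (singleton_subset_iff.2 hxI) hIM
      have hr : runit A I = 1 := by simp [runit, Finset.Nonempty, mem_inter]; exact ⟨x, hxA, hxI⟩
      rw [hr]; have := hnn I hIM; linarith
    · have hr : runit A I = 0 := by simp [runit, hAI]
      rw [hr]; simpa using hnn I hIM
  · -- monotonicity
    intro X Y hXY hYM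
    show f X - lam * runit A X ≤ f Y - lam * runit A Y
    have hXM : X ⊆ M := hXY.trans hYM
    by_cases hAX : (A ∩ X).Nonempty
    · have hAY : (A ∩ Y).Nonempty := hAX.mono (inter_subset_inter le_rfl hXY)
      have hrX : runit A X = 1 := by simp [runit, hAX]
      have hrY : runit A Y = 1 := by simp [runit, hAY]
      rw [hrX, hrY]
      have := hmono X Y hXY hYM; linarith
    · by_cases hAY : (A ∩ Y).Nonempty
      · obtain ⟨y, hy⟩ := hAY
        have hyA : y ∈ A := (mem_inter.1 hy).1
        have hyY : y ∈ Y := (mem_inter.1 hy).2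
        have hAXe : A ∩ X = ∅ := not_nonempty_iff_eq_empty.1 hAX
        have key : lam ≤ f (insert y X) - f X := dimin y X hyA hXM hAXe
        have hins : insert y X ⊆ Y := insert_subset hyY hXY
        have hm : f (insert y X) ≤ f Y := hmono _ _ hins hYM
        have hrX : runit A X = 0 := by simp [runit, hAX]
        have hrY : runit A Y = 1 := by
          simp [runit, Finset.Nonempty, mem_inter]; exact ⟨y, hyA, hyY⟩
        rw [hrX, hrY]; linarith
      · have hrX : runit A X = 0 := by simp [runit, hAX]
        have hrY : runit A Y = 0 := by simp [runit, hAY]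
        rw [hrX, hrY]
        have := hmono X Y hXY hYM; linarith
  · -- submodularity
    intro X Y hXM hYM
    show f (X ∪ Y) - lam * runit A (X ∪ Y) + (f (X ∩ Y) - lam * runit A (X ∩ Y)) ≤
      f X - lam * runit A X + (f Y - lam * runit A Y)
    have hsubf := hsub X Y hXM hYM
    have hiU : A ∩ (X ∪ Y) = (A ∩ X) ∪ (A ∩ Y) := inter_union_distrib_left A X Y
    by_cases hAX : (A ∩ X).Nonempty
    · by_cases hAY : (A ∩ Y).Nonempty
      · have hrX : runit A X = 1 := by simp [runit, hAX]
        have hrY : runit A Y = 1 := by simp [runit, hAY]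
        have hrU : runit A (X ∪ Y) = 1 := by
          simp only [runit, hiU, if_pos (hAX.mono subset_union_left)]
        by_cases hAI : (A ∩ (X ∩ Y)).Nonempty
        · have hrI : runit A (X ∩ Y) = 1 := by simp [runit, hAI]
          rw [hrX, hrY, hrU, hrI]; linarith
        · -- the hard case
          have hrI : runit A (X ∩ Y) = 0 := by simp [runit, hAI]
          rw [hrX, hrY, hrU, hrI]
          obtain ⟨x, hx⟩ := hAX
          obtain ⟨y, hy⟩ := hAY
          have hxA : x ∈ A := (mem_inter.1 hx).1
          have hxX : x ∈ X := (mem_inter.1 hx).2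
          have hyA : y ∈ A := (mem_inter.1 hy).1
          have hyY : y ∈ Y := (mem_inter.1 hy).2
          have hxy : x ≠ y := by
            rintro rfl
            exact hAI ⟨x, mem_inter.2 ⟨hxA, mem_inter.2 ⟨hxX, hyY⟩⟩⟩
          have hB : X ∩ Y ⊆ M \ A := by
            intro a ha
            simp only [mem_sdiff]
            refine ⟨hXM (mem_inter.1 ha).1, fun haA => ?_⟩
            exact hAI ⟨a, mem_inter.2 ⟨haA, ha⟩⟩
          have hlam := h1 x hxA y hyA hxy (X ∩ Y) hB
          have hBM : X ∩ Y ⊆ M := inter_subset_left.trans hXM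
          have step1 : pmi f {x} {y} (X ∩ Y) ≤ pmi f X {y} (X ∩ Y) :=
            pmiL {x} X {y} (X ∩ Y) (singleton_subset_iff.2 hxX) hXM
              (singleton_subset_iff.2 (hAM hyA)) hBM
          have step2 : pmi f X {y} (X ∩ Y) ≤ pmi f X Y (X ∩ Y) := by
            rw [pmiComm X {y} (X ∩ Y), pmiComm X Y (X ∩ Y)]
            exact pmiL {y} Y X (X ∩ Y) (singleton_subset_iff.2 hyY) hYM hXM hBM
          have heq : pmi f X Y (X ∩ Y) = f X + f Y - f (X ∪ Y) - f (X ∩ Y) := by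
            have e1 : X ∪ (X ∩ Y) = X := union_eq_left.2 inter_subset_left
            have e2 : Y ∪ (X ∩ Y) = Y := union_eq_left.2 inter_subset_right
            have e3 : X ∪ Y ∪ (X ∩ Y) = X ∪ Y :=
              union_eq_left.2 (inter_subset_left.trans subset_union_left)
            simp only [pmi, e1, e2, e3]
          rw [heq] at step2
          linarith
      · have hAI : ¬(A ∩ (X ∩ Y)).Nonempty := fun h =>
          hAY (h.mono (inter_subset_inter le_rfl inter_subset_right))
        have hrY : runit A Y = 0 := by simp [runit, hAY]
        have hrI : runit A (X ∩ Y) = 0 := by simp [runit, hAI]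
        have hrX : runit A X = 1 := by simp [runit, hAX]
        have hrU : runit A (X ∪ Y) = 1 := by
          simp only [runit, hiU, if_pos (hAX.mono subset_union_left)]
        rw [hrX, hrY, hrU, hrI]; linarith
    · have hAI : ¬(A ∩ (X ∩ Y)).Nonempty := fun h =>
        hAX (h.mono (inter_subset_inter le_rfl inter_subset_left))
      have hrX : runit A X = 0 := by simp [runit, hAX]
      have hrI : runit A (X ∩ Y) = 0 := by simp [runit, hAI]
      by_cases hAY : (A ∩ Y).Nonempty
      · have hrY : runit A Y = 1 := by simp [runit, hAY]
        have hrU : runit A (X ∪ Y) = 1 := by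
          simp only [runit, hiU, if_pos (hAY.mono subset_union_right)]
        rw [hrX, hrY, hrU, hrI]; linarith
      · have hrY : runit A Y = 0 := by simp [runit, hAY]
        have hrU : runit A (X ∪ Y) = 0 := by
          simp only [runit, hiU]
          rw [if_neg]
          simp only [not_nonempty_iff_eq_empty.1 hAX, not_nonempty_iff_eq_empty.1 hAY]
          simp
        rw [hrX, hrY, hrU, hrI]; linarith
end
end

section
/- Let (f,M) be a polymatroid and a,b ∈ M. Then the tightening f↓a = f − f(a|M∖{a})·r_{{a}} is a polymatroid on M that is tight at a (i.e. (f↓a)(a|M∖{a}) = 0); moreover (f↓a)↓a = f↓a and (f↓a)↓b = (f↓b)↓a. -/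
open Finset

noncomputable section

variable {α : Type*} [DecidableEq α]

lemma runit_eq (a : α) (I : Finset α) : runit {a} I = if a ∈ I then 1 else 0 := by
  unfold runit
  by_cases h : a ∈ I
  · simp [Finset.singleton_inter_of_mem h, h]
  · simp [Finset.singleton_inter_of_notMem h, h]

lemma sing_union_sdiff {M : Finset α} {a : α} (ha : a ∈ M) : {a} ∪ (M \ {a}) = M := by
  exact Finset.union_sdiff_of_subset (Finset.singleton_subset_iff.mpr ha)

lemma union_sdiff_full {M A : Finset α} {a : α} (hA : A ⊆ M) (haA : a ∈ A) :
    A ∪ (M \ {a}) = M := by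
  ext x
  simp only [Finset.mem_union, Finset.mem_sdiff, Finset.mem_singleton]
  constructor
  · rintro (h | ⟨h, _⟩) 
    · exact hA h
    · exact h
  · intro hx
    by_cases hxa : x = a
    · exact Or.inl (hxa ▸ haA)
    · exact Or.inr ⟨hx, hxa⟩

lemma inter_sdiff_eq' {M A : Finset α} {a : α} (hA : A ⊆ M) :
    A ∩ (M \ {a}) = A \ {a} := by
  ext x
  simp only [Finset.mem_inter, Finset.mem_sdiff, Finset.mem_singleton]
  constructor
  · rintro ⟨h1, _, h3⟩; exact ⟨h1, h3⟩
  · rintro ⟨h1, h2⟩; exact ⟨h1, hA h1, h2⟩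

/-- the tightening `f↓a` is a polymatroid on `M`, is tight at `a`,
is idempotent, and tightenings at different elements commute. -/
theorem statement_1 (M : Finset α) (f : Finset α → ℝ) (a b : α)
    (ha : a ∈ M) (hb : b ∈ M) (hf : IsPolymatroid M f) :
    IsPolymatroid M (tightenAt M f a) ∧
    pcd (tightenAt M f a) {a} (M \ {a}) = 0 ∧
    tightenAt M (tightenAt M f a) a = tightenAt M f a ∧
    tightenAt M (tightenAt M f a) b = tightenAt M (tightenAt M f b) a := by

  obtain ⟨h0, hnn, hmono, hsub⟩ := hf
  set c := pcd f {a} (M \ {a}) with hc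
  have hcval : c = f M - f (M \ {a}) := by
    rw [hc, pcd, sing_union_sdiff ha]
  have hcnn : 0 ≤ c := by
    rw [hcval]
    linarith [hmono (M \ {a}) M Finset.sdiff_subset (Finset.Subset.refl M)]
  have key : ∀ A, A ⊆ M → a ∈ A → f M + f (A \ {a}) ≤ f A + f (M \ {a}) := by
    intro A hA haA
    have := hsub A (M \ {a}) hA Finset.sdiff_subset
    rwa [union_sdiff_full hA haA, inter_sdiff_eq' hA] at this
  have hpoly : IsPolymatroid M (tightenAt M f a) := by
    refine ⟨?_, ?_, ?_, ?_⟩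
    · simp [tightenAt, runit_eq, h0]
    · intro A hA
      rw [tightenAt]
      simp only [← hc]
      rw [runit_eq]
      by_cases h : a ∈ A
      · have h1 := key A hA h
        have h2 := hnn (A \ {a}) ((Finset.sdiff_subset).trans hA)
        simp only [h, if_true]
        rw [hcval]; linarith
      · simp only [h, if_false]
        have := hnn A hA
        linarith
    · intro A B hAB hB
      have hA := hAB.trans hB
      simp only [tightenAt, ← hc, runit_eq]
      by_cases haA : a ∈ A
      · have haB : a ∈ B := hAB haA
        simp only [haA, haB, if_true]
        linarith [hmono A B hAB hB]
      · by_cases haB : a ∈ B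
        · simp only [haA, haB, if_true, if_false]
          have h1 := key B hB haB
          have h2 : A ⊆ B \ {a} :=
            Finset.subset_sdiff.mpr ⟨hAB, Finset.disjoint_singleton_right.mpr haA⟩
          have h3 := hmono A (B \ {a}) h2 ((Finset.sdiff_subset).trans hB)
          rw [hcval]; linarith
        · simp only [haA, haB, if_false]
          linarith [hmono A B hAB hB]
    · intro A B hA hB
      simp only [tightenAt, ← hc, runit_eq]
      have hs := hsub A B hA hB
      by_cases haA : a ∈ A <;> by_cases haB : a ∈ B <;>
        simp only [haA, haB, Finset.mem_union, Finset.mem_inter, if_true, if_false,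
          true_or, or_true, false_or, or_false, true_and, and_true, false_and, and_false,
          if_true, if_false] <;> linarith
  have htight : pcd (tightenAt M f a) {a} (M \ {a}) = 0 := by
    rw [pcd, sing_union_sdiff ha]
    simp only [tightenAt, ← hc, runit_eq, ha, if_true,
      Finset.mem_sdiff, Finset.mem_singleton, not_true, and_false, if_false]
    rw [hcval]; ring
  have hidem : tightenAt M (tightenAt M f a) a = tightenAt M f a := by
    funext I
    rw [tightenAt, htight]
    ring
  refine ⟨hpoly, htight, hidem, ?_⟩
  by_cases hab : a = b
  · subst hab
    rw [hidem]
  · have hamb : a ∈ M \ {b} := Finset.mem_sdiff.mpr ⟨ha, by simp [hab]⟩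
    have hbma : b ∈ M \ {a} := Finset.mem_sdiff.mpr ⟨hb, by simp [Ne.symm hab]⟩
    set cb := pcd f {b} (M \ {b}) with hcb
    have h1 : pcd (tightenAt M f a) {b} (M \ {b}) = cb := by
      rw [pcd, sing_union_sdiff hb]
      simp only [tightenAt, ← hc, runit_eq, ha, hamb, if_true, hcb, pcd,
        sing_union_sdiff hb]
      ring
    have h2 : pcd (tightenAt M f b) {a} (M \ {a}) = c := by
      rw [pcd, sing_union_sdiff ha]
      simp only [tightenAt, ← hcb, runit_eq, hb, hbma, if_true, hc, pcd,
        sing_union_sdiff ha]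
      ring
    funext I
    simp only [tightenAt] at h1 h2 ⊢
    rw [h1, h2]
    simp only [← hc, ← hcb]
    ring
end
end

section
/- Let (f,M) be a polymatroid. Then for every A ⊆ M the difference f − f↓A is a modular polymatroid on M. In particular f = f↓M + (f − f↓M) expresses f as the sum of a tight polymatroid and a modular polymatroid, and this decomposition is unique: if f = g + m where g is a polymatroid on M tight at every element of M and m is a modular polymatroid on M, then g = f↓M and m = f − f↓M. -/
open Finset

noncomputable section

variable {α : Type*} [DecidableEq α]

/-- A polymatroid is modular if `f(A) = Σ_{i∈A} f({i})` for all `A ⊆ M`. -/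
def IsModularPM (M : Finset α) (f : Finset α → ℝ) : Prop :=
  IsPolymatroid M f ∧ ∀ A ⊆ M, f A = ∑ i ∈ A, f {i}

/-! Tightening at `a` subtracts `f(a|M∖a)` from every set containing `a`. Since tightening at one
element changes no other coefficient `f(b|M∖b)`, tightening along `A` subtracts the modular function
`I ↦ Σ_{a ∈ A ∩ I} f(a|M∖a)`, whose weights are nonnegative by monotonicity. Each single tightening
keeps `f` a polymatroid because, by submodularity, `f(a|M∖a) ≤ f(a|I∖a)` whenever `a ∈ I ⊆ M`.
In a decomposition `f = g + m` with `g` tight, comparing `M` with `M∖a` gives `m({a}) = f(a|M∖a)`,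
so `m` is the modular part above. -/

def tightCoeff (M : Finset α) (f : Finset α → ℝ) (a : α) : ℝ := pcd f {a} (M \ {a})

def modularFn (S : Finset α) (c : α → ℝ) (I : Finset α) : ℝ := ∑ a ∈ S ∩ I, c a

section ModularFn

variable {S : Finset α} {c : α → ℝ}

lemma modularFn_eq_sum_ite (S : Finset α) (c : α → ℝ) (I : Finset α) :
    modularFn S c I = ∑ a ∈ S, if a ∈ I then c a else 0 :=
  (sum_ite_mem S I c).symm

lemma modularFn_singleton (S : Finset α) (c : α → ℝ) (i : α) :
    modularFn S c {i} = if i ∈ S then c i else 0 := by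
  simp [modularFn_eq_sum_ite]

lemma modularFn_insert {a : α} (ha : a ∉ S) (I : Finset α) :
    modularFn (insert a S) c I = modularFn {a} c I + modularFn S c I := by
  simp only [modularFn_eq_sum_ite, sum_insert ha, sum_singleton]

lemma modularFn_congr {d : α → ℝ} (h : ∀ a ∈ S, c a = d a) : modularFn S c = modularFn S d :=
  funext fun _ => sum_congr rfl fun a ha => h a (mem_inter.mp ha).1

lemma isModularPM_modularFn (M : Finset α) (hc : ∀ a ∈ S, 0 ≤ c a) :
    IsModularPM M (modularFn S c) := by
  have hmono : ∀ A B : Finset α, A ⊆ B → modularFn S c A ≤ modularFn S c B := fun A B hAB =>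
    sum_le_sum_of_subset_of_nonneg (inter_subset_inter_left hAB)
      fun a ha _ => hc a (mem_inter.mp ha).1
  refine ⟨⟨by simp [modularFn], fun A _ => ?_, fun A B hAB _ => hmono A B hAB, fun A B _ _ => ?_⟩,
    fun A _ => ?_⟩
  · simpa [modularFn] using hmono ∅ A (empty_subset A)
  · rw [modularFn, modularFn, inter_union_distrib_left, inter_inter_distrib_left,
      sum_union_inter]
    rfl
  · rw [modularFn, inter_comm, ← sum_ite_mem]
    exact sum_congr rfl fun i _ => (modularFn_singleton S c i).symm

lemma pcd_modularFn_of_mem {a : α} {K : Finset α} (ha : a ∈ S) (haK : a ∉ K) :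
    pcd (modularFn S c) {a} K = c a := by
  have hins : S ∩ ({a} ∪ K) = insert a (S ∩ K) := by
    rw [inter_union_distrib_left, inter_singleton_of_mem ha, insert_eq]
  have ha' : a ∉ S ∩ K := fun h => haK (mem_inter.mp h).2
  rw [pcd, modularFn, modularFn, hins, sum_insert ha', add_sub_cancel_right]

lemma pcd_modularFn_of_notMem {a : α} {K : Finset α} (ha : a ∉ S) :
    pcd (modularFn S c) {a} K = 0 := by
  rw [pcd, modularFn, modularFn, inter_union_distrib_left, inter_singleton_of_notMem ha,
    empty_union, sub_self]

end ModularFn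

lemma pcd_sub (f g : Finset α → ℝ) (I K : Finset α) :
    pcd (fun J => f J - g J) I K = pcd f I K - pcd g I K := by
  simp only [pcd]
  ring

section Tightening

variable {M : Finset α} {f : Finset α → ℝ}

lemma tightCoeff_eq_sub {a : α} (ha : a ∈ M) : tightCoeff M f a = f M - f (M \ {a}) := by
  rw [tightCoeff, pcd, union_sdiff_of_subset (singleton_subset_iff.mpr ha)]

lemma tightenAt_eq (M : Finset α) (f : Finset α → ℝ) (a : α) :
    tightenAt M f a = fun I => f I - modularFn {a} (tightCoeff M f) I := by
  funext I
  by_cases haI : a ∈ I <;> simp [tightenAt, runit, modularFn, tightCoeff, haI]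

lemma tightCoeff_tightenAt_of_ne {a b : α} (hab : b ≠ a) :
    tightCoeff M (tightenAt M f a) b = tightCoeff M f b := by
  rw [tightCoeff, tightenAt_eq, pcd_sub, pcd_modularFn_of_notMem (notMem_singleton.mpr hab),
    sub_zero, tightCoeff]

lemma foldl_tightenAt_eq {l : List α} (hl : l.Nodup) :
    l.foldl (tightenAt M) f = fun I => f I - modularFn l.toFinset (tightCoeff M f) I := by
  induction l generalizing f with
  | nil => simp [modularFn]
  | cons a l ih =>
    obtain ⟨hal, hl⟩ := List.nodup_cons.mp hl
    have hcoeff : ∀ b ∈ l.toFinset, tightCoeff M (tightenAt M f a) b = tightCoeff M f b :=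
      fun b hb => tightCoeff_tightenAt_of_ne fun h => hal (h ▸ List.mem_toFinset.mp hb)
    funext I
    rw [List.foldl_cons, ih hl, modularFn_congr hcoeff, tightenAt_eq, List.toFinset_cons,
      modularFn_insert (mt List.mem_toFinset.mp hal)]
    ring

lemma tightCoeff_foldl_tightenAt {l : List α} (hl : l.Nodup) {a : α} (ha : a ∈ l) :
    tightCoeff M (l.foldl (tightenAt M) f) a = 0 := by
  rw [tightCoeff, foldl_tightenAt_eq hl, pcd_sub,
    pcd_modularFn_of_mem (List.mem_toFinset.mpr ha) (by simp)]
  exact sub_self _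

variable (hf : IsPolymatroid M f)
include hf

lemma tightCoeff_nonneg {a : α} (ha : a ∈ M) : 0 ≤ tightCoeff M f a := by
  rw [tightCoeff_eq_sub ha, sub_nonneg]
  exact hf.2.2.1 _ M sdiff_subset subset_rfl

lemma tightCoeff_le_of_mem {a : α} {A : Finset α} (haA : a ∈ A) (hA : A ⊆ M) :
    tightCoeff M f a ≤ f A - f (A \ {a}) := by
  have hunion : M \ {a} ∪ A = M := by
    refine (union_subset sdiff_subset hA).antisymm fun x hx => ?_
    by_cases hxa : x = a
    · exact mem_union_right _ (hxa ▸ haA)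
    · exact mem_union_left _ (mem_sdiff.mpr ⟨hx, notMem_singleton.mpr hxa⟩)
  have hsub := hf.2.2.2 (M \ {a}) A sdiff_subset hA
  rw [hunion, sdiff_inter_right_comm, inter_eq_right.mpr hA] at hsub
  rw [tightCoeff_eq_sub (hA haA)]
  linarith

lemma isPolymatroid_tightenAt (a : α) : IsPolymatroid M (tightenAt M f a) := by
  have hval : ∀ I, tightenAt M f a I = f I - if a ∈ I then tightCoeff M f a else 0 := by
    intro I
    split_ifs with haI <;> simp [tightenAt_eq, modularFn, haI]
  have hmono : ∀ A B, A ⊆ B → B ⊆ M → tightenAt M f a A ≤ tightenAt M f a B := by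
    intro A B hAB hB
    have hfAB := hf.2.2.1 A B hAB hB
    rw [hval, hval]
    by_cases haA : a ∈ A
    · simp only [haA, hAB haA, if_true]
      linarith
    by_cases haB : a ∈ B
    · have hAB' : A ⊆ B \ {a} := subset_sdiff.mpr ⟨hAB, disjoint_singleton_right.mpr haA⟩
      have := hf.2.2.1 A (B \ {a}) hAB' (sdiff_subset.trans hB)
      have := tightCoeff_le_of_mem hf haB hB
      simp only [haA, haB, if_true, if_false]
      linarith
    · simp only [haA, haB, if_false]
      linarith
  have hempty : tightenAt M f a ∅ = 0 := by simp [hval, hf.1]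
  refine ⟨hempty, fun A hA => hempty ▸ hmono ∅ A (empty_subset A) hA, hmono, ?_⟩
  intro A B hA hB
  have := hf.2.2.2 A B hA hB
  simp only [hval]
  by_cases haA : a ∈ A <;> by_cases haB : a ∈ B <;> simp [haA, haB] <;> linarith

lemma isPolymatroid_foldl_tightenAt (l : List α) :
    IsPolymatroid M (l.foldl (tightenAt M) f) := by
  induction l generalizing f with
  | nil => exact hf
  | cons a l ih => exact ih (isPolymatroid_tightenAt hf a)

end Tightening

lemma IsModularPM.tightCoeff_eq {M : Finset α} {m : Finset α → ℝ} (hm : IsModularPM M m) {a : α}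
    (ha : a ∈ M) : tightCoeff M m a = m {a} := by
  rw [tightCoeff_eq_sub ha, hm.2 M subset_rfl, hm.2 _ sdiff_subset,
    sum_eq_sum_sdiff_singleton_add ha, add_sub_cancel_left]

lemma eq_modularFn_of_eq_add {M : Finset α} {f g m : Finset α → ℝ}
    (hg : ∀ a ∈ M, tightCoeff M g a = 0) (hm : IsModularPM M m)
    (hfgm : ∀ A ⊆ M, f A = g A + m A) {A : Finset α} (hA : A ⊆ M) :
    m A = modularFn M (tightCoeff M f) A := by
  have hcoeff : ∀ a ∈ M, m {a} = tightCoeff M f a := by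
    intro a ha
    have hga := hg a ha
    rw [tightCoeff_eq_sub ha] at hga
    rw [← hm.tightCoeff_eq ha, tightCoeff_eq_sub ha, tightCoeff_eq_sub ha, hfgm M subset_rfl,
      hfgm _ sdiff_subset]
    linarith
  rw [hm.2 A hA, modularFn, inter_eq_right.mpr hA]
  exact sum_congr rfl fun a ha => hcoeff a (hA ha)

/-- `f − f↓A` is a modular polymatroid for every `A ⊆ M` (given as a
duplicate-free list); `f↓M` is a polymatroid tight at every element of `M`, so
`f = f↓M + (f − f↓M)` decomposes `f` into a tight plus a modular part, and this
decomposition is unique. -/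
theorem statement_3 (M : Finset α) (f : Finset α → ℝ) (hf : IsPolymatroid M f) :
    (∀ l : List α, l.Nodup → (∀ a ∈ l, a ∈ M) →
      IsModularPM M (fun I => f I - l.foldl (tightenAt M) f I)) ∧
    (∀ l : List α, l.Nodup → l.toFinset = M →
      (IsPolymatroid M (l.foldl (tightenAt M) f) ∧
       (∀ a ∈ M, pcd (l.foldl (tightenAt M) f) {a} (M \ {a}) = 0) ∧
       (∀ g m : Finset α → ℝ, IsPolymatroid M g →
          (∀ a ∈ M, pcd g {a} (M \ {a}) = 0) → IsModularPM M m →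
          (∀ A ⊆ M, f A = g A + m A) →
          ∀ A ⊆ M, g A = l.foldl (tightenAt M) f A ∧
                   m A = f A - l.foldl (tightenAt M) f A))) := by
  refine ⟨fun l hl hlM => ?_, fun l hl hlM => ?_⟩
  · simp only [foldl_tightenAt_eq hl, sub_sub_cancel]
    exact isModularPM_modularFn M fun a ha => tightCoeff_nonneg hf (hlM a (List.mem_toFinset.mp ha))
  refine ⟨isPolymatroid_foldl_tightenAt hf l,
    fun a ha => tightCoeff_foldl_tightenAt hl (List.mem_toFinset.mp (hlM ▸ ha)),
    fun g m _ hg hm hfgm A hA => ?_⟩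
  have hmA := eq_modularFn_of_eq_add hg hm hfgm hA
  rw [foldl_tightenAt_eq hl, hlM]
  constructor <;> linarith [hfgm A hA]
end
end

section
/- Let (f,M) be a polymatroid, x ∉ M, and e a real-valued function on all subsets of M (including ∅). Define f_x on subsets of M∪{x} by f_x(A) = f(A) and f_x(A∪{x}) = f(A) + e(A) for A ⊆ M. Then f_x is a polymatroid on M∪{x} if and only if the following three conditions hold: (1) e(A) ≥ e(B) ≥ 0 whenever A ⊆ B ⊆ M; (2) e(a|M∖{a}) + f(a|M∖{a}) ≥ 0 for every a ∈ M; (3) e(a,b|A) + f(a,b|A) ≥ 0 for all distinct a,b ∈ M and all A ⊆ M∖{a,b}. -/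
open Finset

noncomputable section

variable {α : Type*} [DecidableEq α]

/-- one-step diminishing returns implies diminishing returns vs any superset -/
lemma aux_diminish (M : Finset α) (g : Finset α → ℝ)
    (h : ∀ a ∈ M, ∀ b ∈ M, a ≠ b → ∀ A, A ⊆ M → a ∉ A → b ∉ A →
      g (insert a (insert b A)) + g A ≤ g (insert a A) + g (insert b A)) :
    ∀ a ∈ M, ∀ A B : Finset α, A ⊆ B → B ⊆ M → a ∉ B →
      g (insert a B) - g B ≤ g (insert a A) - g A := by
  intro a ha
  have key : ∀ n : ℕ, ∀ A B : Finset α, A ⊆ B → B ⊆ M → a ∉ B → (B \ A).card = n →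
      g (insert a B) - g B ≤ g (insert a A) - g A := by
    intro n
    induction n with
    | zero =>
      intro A B hAB hBM haB hc
      have : B ⊆ A := by
        rw [Finset.card_eq_zero, Finset.sdiff_eq_empty_iff_subset] at hc
        exact hc
      have : A = B := Finset.Subset.antisymm hAB this
      subst this; linarith
    | succ n ih =>
      intro A B hAB hBM haB hc
      have hne : (B \ A).Nonempty := by
        rw [← Finset.card_pos, hc]; omega
      obtain ⟨b, hb⟩ := hne
      have hbB : b ∈ B := (Finset.mem_sdiff.mp hb).1
      have hbA : b ∉ A := (Finset.mem_sdiff.mp hb).2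
      have h1 : insert b A ⊆ B := Finset.insert_subset hbB hAB
      have hcard : (B \ insert b A).card = n := by
        rw [Finset.sdiff_insert, Finset.card_erase_of_mem hb, hc]; omega
      have haA : a ∉ A := fun hyA => haB (hAB hyA)
      have hab : a ≠ b := by rintro rfl; exact haB hbB
      have step := h a ha b (hBM hbB) hab A (hAB.trans hBM) haA hbA
      have ihr := ih (insert b A) B h1 hBM haB hcard
      linarith
  intro A B hAB hBM haB
  exact key (B \ A).card A B hAB hBM haB rfl

lemma aux_submod (M : Finset α) (g : Finset α → ℝ)
    (h : ∀ a ∈ M, ∀ b ∈ M, a ≠ b → ∀ A, A ⊆ M → a ∉ A → b ∉ A →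
      g (insert a (insert b A)) + g A ≤ g (insert a A) + g (insert b A)) :
    ∀ A B : Finset α, A ⊆ M → B ⊆ M → g (A ∪ B) + g (A ∩ B) ≤ g A + g B := by
  have key : ∀ n : ℕ, ∀ A B : Finset α, A ⊆ M → B ⊆ M → (A \ B).card = n →
      g (A ∪ B) + g (A ∩ B) ≤ g A + g B := by
    intro n
    induction n with
    | zero =>
      intro A B hAM hBM hc
      have hAB : A ⊆ B := by
        rwa [Finset.card_eq_zero, Finset.sdiff_eq_empty_iff_subset] at hc
      rw [Finset.union_eq_right.mpr hAB, Finset.inter_eq_left.mpr hAB]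
      linarith
    | succ n ih =>
      intro A B hAM hBM hc
      have hne : (A \ B).Nonempty := by rw [← Finset.card_pos, hc]; omega
      obtain ⟨a, ha⟩ := hne
      have haA : a ∈ A := (Finset.mem_sdiff.mp ha).1
      have haB : a ∉ B := (Finset.mem_sdiff.mp ha).2
      have hcard : (A \ insert a B).card = n := by
        rw [Finset.sdiff_insert, Finset.card_erase_of_mem ha, hc]; omega
      have ihr := ih A (insert a B) hAM (Finset.insert_subset (hAM haA) hBM) hcard
      have e1 : A ∪ insert a B = A ∪ B := by
        rw [Finset.union_insert, Finset.insert_eq_self.mpr (Finset.mem_union_left _ haA)]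
      have e2 : A ∩ insert a B = insert a (A ∩ B) := by
        rw [Finset.inter_comm, Finset.insert_inter_of_mem haA, Finset.inter_comm]
      rw [e1, e2] at ihr
      have dim := aux_diminish M g h a (hAM haA) (A ∩ B) B Finset.inter_subset_right hBM haB
      linarith
  intro A B hAM hBM
  exact key (A \ B).card A B hAM hBM rfl

lemma aux_mono (M : Finset α) (g : Finset α → ℝ)
    (h : ∀ a ∈ M, ∀ b ∈ M, a ≠ b → ∀ A, A ⊆ M → a ∉ A → b ∉ A →
      g (insert a (insert b A)) + g A ≤ g (insert a A) + g (insert b A))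
    (h2 : ∀ a ∈ M, g (M \ {a}) ≤ g M) :
    ∀ A B : Finset α, A ⊆ B → B ⊆ M → g A ≤ g B := by
  have key : ∀ n : ℕ, ∀ A B : Finset α, A ⊆ B → B ⊆ M → (B \ A).card = n → g A ≤ g B := by
    intro n
    induction n with
    | zero =>
      intro A B hAB hBM hc
      have : B ⊆ A := by
        rwa [Finset.card_eq_zero, Finset.sdiff_eq_empty_iff_subset] at hc
      rw [Finset.Subset.antisymm hAB this]
    | succ n ih =>
      intro A B hAB hBM hc
      have hne : (B \ A).Nonempty := by rw [← Finset.card_pos, hc]; omega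
      obtain ⟨b, hb⟩ := hne
      have hbB : b ∈ B := (Finset.mem_sdiff.mp hb).1
      have hbA : b ∉ A := (Finset.mem_sdiff.mp hb).2
      have hbM : b ∈ M := hBM hbB
      have hAMb : A ⊆ M \ {b} := by
        intro y hy
        simp only [Finset.mem_sdiff, Finset.mem_singleton]
        exact ⟨hBM (hAB hy), fun hyb => hbA (hyb ▸ hy)⟩
      have hbMb : b ∉ M \ {b} := by simp
      have dim := aux_diminish M g h b hbM A (M \ {b}) hAMb Finset.sdiff_subset hbMb
      have eM : insert b (M \ {b}) = M := by
        rw [← Finset.erase_eq, Finset.insert_erase hbM]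
      rw [eM] at dim
      have h2b := h2 b hbM
      have step : g A ≤ g (insert b A) := by linarith
      have ihr := ih (insert b A) B (Finset.insert_subset hbB hAB) hBM
        (by rw [Finset.sdiff_insert, Finset.card_erase_of_mem hb, hc]; omega)
      linarith
  intro A B hAB hBM
  exact key (B \ A).card A B hAB hBM rfl

/-- the extension `f_x` of `f` by a new point `x` via the excess
function `e` (i.e. `f_x(A∪{x}) = f(A)+e(A)`) is a polymatroid on `M∪{x}` iff
`e` is non-negative and non-increasing, `e(a|M∖a)+f(a|M∖a) ≥ 0`, and
`e(a,b|A)+f(a,b|A) ≥ 0`. -/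
theorem statement_4 (M : Finset α) (f : Finset α → ℝ) (x : α) (hx : x ∉ M)
    (hf : IsPolymatroid M f) (e fx : Finset α → ℝ)
    (hfx1 : ∀ A ⊆ M, fx A = f A)
    (hfx2 : ∀ A ⊆ M, fx (A ∪ {x}) = f A + e A) :
    IsPolymatroid (M ∪ {x}) fx ↔
      ((∀ A B : Finset α, A ⊆ B → B ⊆ M → e B ≤ e A ∧ 0 ≤ e B) ∧
       (∀ a ∈ M, 0 ≤ pcd e {a} (M \ {a}) + pcd f {a} (M \ {a})) ∧
       (∀ a ∈ M, ∀ b ∈ M, a ≠ b → ∀ A ⊆ M \ {a, b},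
          0 ≤ pmi e {a} {b} A + pmi f {a} {b} A)) := by
  obtain ⟨hf0, hfpos, hfmono, hfsub⟩ := hf
  constructor
  · rintro ⟨h0, hpos, hmono, hsub⟩
    refine ⟨?_, ?_, ?_⟩
    · intro A B hAB hBM
      have hAM : A ⊆ M := hAB.trans hBM
      have hBx : B ∪ {x} ⊆ M ∪ {x} := Finset.union_subset_union hBM Finset.Subset.rfl
      have hposB : 0 ≤ e B := by
        have := hmono B (B ∪ {x}) Finset.subset_union_left hBx
        rw [hfx1 B hBM, hfx2 B hBM] at this
        linarith
      refine ⟨?_, hposB⟩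
      have hu : (A ∪ {x}) ∪ B = B ∪ {x} := by
        rw [Finset.union_right_comm, Finset.union_eq_right.mpr hAB]
      have hi : (A ∪ {x}) ∩ B = A := by
        ext y
        simp only [Finset.mem_inter, Finset.mem_union, Finset.mem_singleton]
        constructor
        · rintro ⟨hyA | rfl, hyB⟩
          · exact hyA
          · exact absurd (hBM hyB) hx
        · intro hyA
          exact ⟨Or.inl hyA, hAB hyA⟩
      have := hsub (A ∪ {x}) B (Finset.union_subset_union hAM Finset.Subset.rfl)
        (hBM.trans Finset.subset_union_left)
      rw [hu, hi, hfx2 A hAM, hfx2 B hBM, hfx1 A hAM, hfx1 B hBM] at this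
      linarith
    · intro a ha
      have heq : {a} ∪ (M \ {a}) = M := by
        rw [← Finset.insert_eq, ← Finset.erase_eq, Finset.insert_erase ha]
      have hsM : M \ {a} ⊆ M := Finset.sdiff_subset
      have := hmono ((M \ {a}) ∪ {x}) (M ∪ {x})
        (Finset.union_subset_union hsM Finset.Subset.rfl) Finset.Subset.rfl
      rw [hfx2 _ hsM, hfx2 M Finset.Subset.rfl] at this
      unfold pcd
      rw [heq]
      linarith
    · intro a ha b hb hab A hA
      have haA : a ∉ A := fun h => by simpa using (Finset.mem_sdiff.mp (hA h)).2
      have hbA : b ∉ A := fun h => by simpa using (Finset.mem_sdiff.mp (hA h)).2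
      have hAM : A ⊆ M := hA.trans Finset.sdiff_subset
      have hS1 : {a} ∪ A ⊆ M := by
        rw [← Finset.insert_eq]; exact Finset.insert_subset ha hAM
      have hS2 : {b} ∪ A ⊆ M := by
        rw [← Finset.insert_eq]; exact Finset.insert_subset hb hAM
      have hS3 : {a} ∪ {b} ∪ A ⊆ M := by
        rw [Finset.union_assoc, ← Finset.insert_eq]
        exact Finset.insert_subset ha hS2
      have hu : (({a} ∪ A) ∪ {x}) ∪ (({b} ∪ A) ∪ {x}) = ({a} ∪ {b} ∪ A) ∪ {x} := by
        ext y
        simp only [Finset.mem_union, Finset.mem_singleton]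
        tauto
      have hi : (({a} ∪ A) ∪ {x}) ∩ (({b} ∪ A) ∪ {x}) = A ∪ {x} := by
        ext y
        simp only [Finset.mem_inter, Finset.mem_union, Finset.mem_singleton]
        constructor
        · rintro ⟨(rfl | hyA) | rfl, h2⟩
          · rcases h2 with (hyb | hyA) | hyx
            · exact absurd hyb hab
            · exact Or.inl hyA
            · exact absurd (hyx ▸ ha) hx
          · exact Or.inl hyA
          · exact Or.inr rfl
        · rintro (hyA | rfl)
          · exact ⟨Or.inl (Or.inr hyA), Or.inl (Or.inr hyA)⟩
          · exact ⟨Or.inr rfl, Or.inr rfl⟩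
      have := hsub (({a} ∪ A) ∪ {x}) (({b} ∪ A) ∪ {x})
        (Finset.union_subset_union hS1 Finset.Subset.rfl)
        (Finset.union_subset_union hS2 Finset.Subset.rfl)
      rw [hu, hi, hfx2 _ hS1, hfx2 _ hS2, hfx2 _ hS3, hfx2 _ hAM] at this
      unfold pmi
      linarith
  · rintro ⟨h1, h2, h3⟩
    have hepos : ∀ A, A ⊆ M → 0 ≤ e A := fun A hA => (h1 A A Finset.Subset.rfl hA).2
    have hedec : ∀ A B, A ⊆ B → B ⊆ M → e B ≤ e A := fun A B h h' => (h1 A B h h').1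
    set g : Finset α → ℝ := fun A => f A + e A with hg
    have hstep : ∀ a ∈ M, ∀ b ∈ M, a ≠ b → ∀ A, A ⊆ M → a ∉ A → b ∉ A →
        g (insert a (insert b A)) + g A ≤ g (insert a A) + g (insert b A) := by
      intro a ha b hb hab A hAM haA hbA
      have hA' : A ⊆ M \ {a, b} := by
        intro y hy
        simp only [Finset.mem_sdiff, Finset.mem_insert, Finset.mem_singleton]
        exact ⟨hAM hy, by rintro (rfl | rfl) <;> [exact haA hy; exact hbA hy]⟩
      have := h3 a ha b hb hab A hA'
      unfold pmi at this
      simp only [← Finset.insert_eq, Finset.insert_union] at this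
      simp only [hg]
      linarith
    have hgsub := aux_submod M g hstep
    have hgM : ∀ a ∈ M, g (M \ {a}) ≤ g M := by
      intro a ha
      have := h2 a ha
      unfold pcd at this
      have heq : {a} ∪ (M \ {a}) = M := by
        rw [← Finset.insert_eq, ← Finset.erase_eq, Finset.insert_erase ha]
      rw [heq] at this
      simp only [hg]
      linarith
    have hgmono := aux_mono M g hstep hgM
    have hnx : ∀ S : Finset α, S ⊆ M ∪ {x} → x ∉ S → S ⊆ M := by
      intro S hS hxS y hy
      rcases Finset.mem_union.mp (hS hy) with h | h
      · exact h
      · exact absurd ((Finset.mem_singleton.mp h) ▸ hy) hxS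
    have herx : ∀ S : Finset α, S ⊆ M ∪ {x} → S.erase x ⊆ M := by
      intro S hS y hy
      rcases Finset.mem_union.mp (hS (Finset.erase_subset _ _ hy)) with h | h
      · exact h
      · exact absurd (Finset.mem_singleton.mp h) (Finset.ne_of_mem_erase hy)
    have hval : ∀ S : Finset α, S ⊆ M ∪ {x} → x ∈ S → fx S = g (S.erase x) := by
      intro S hS hxS
      have heq : (S.erase x) ∪ {x} = S := by
        rw [Finset.union_comm, ← Finset.insert_eq, Finset.insert_erase hxS]
      have := hfx2 (S.erase x) (herx S hS)
      rw [heq] at this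
      rw [this]
    refine ⟨?_, ?_, ?_, ?_⟩
    · rw [hfx1 ∅ (Finset.empty_subset M)]; exact hf0
    · intro A hA
      by_cases hxA : x ∈ A
      · rw [hval A hA hxA]
        exact add_nonneg (hfpos _ (herx A hA)) (hepos _ (herx A hA))
      · rw [hfx1 A (hnx A hA hxA)]
        exact hfpos A (hnx A hA hxA)
    · intro A B hAB hBM'
      by_cases hxB : x ∈ B
      · have hBe := herx B hBM'
        by_cases hxA : x ∈ A
        · rw [hval A (hAB.trans hBM') hxA, hval B hBM' hxB]
          exact hgmono _ _ (Finset.erase_subset_erase x hAB) hBe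
        · rw [hfx1 A (hnx A (hAB.trans hBM') hxA), hval B hBM' hxB]
          have hAB' : A ⊆ B.erase x := Finset.subset_erase.mpr ⟨hAB, hxA⟩
          have := hfmono _ _ hAB' hBe
          have := hepos _ hBe
          simp only [hg]
          linarith
      · have hxA : x ∉ A := fun h => hxB (hAB h)
        rw [hfx1 A (hnx A (hAB.trans hBM') hxA), hfx1 B (hnx B hBM' hxB)]
        exact hfmono _ _ hAB (hnx B hBM' hxB)
    · intro A B hA hB
      by_cases hxA : x ∈ A <;> by_cases hxB : x ∈ B
      · -- x ∈ A, x ∈ B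
        have hxU : x ∈ A ∪ B := Finset.mem_union_left _ hxA
        have hxI : x ∈ A ∩ B := Finset.mem_inter.mpr ⟨hxA, hxB⟩
        rw [hval A hA hxA, hval B hB hxB,
          hval (A ∪ B) (Finset.union_subset hA hB) hxU,
          hval (A ∩ B) ((Finset.inter_subset_left).trans hA) hxI,
          Finset.erase_union_distrib]
        have hIeq : (A ∩ B).erase x = A.erase x ∩ B.erase x := by
          ext y
          simp only [Finset.mem_erase, Finset.mem_inter]
          tauto
        rw [hIeq]
        exact hgsub _ _ (herx A hA) (herx B hB)
      · -- x ∈ A, x ∉ B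
        have hBM : B ⊆ M := hnx B hB hxB
        have hxU : x ∈ A ∪ B := Finset.mem_union_left _ hxA
        have hxI : x ∉ A ∩ B := fun h => hxB (Finset.mem_inter.mp h).2
        have hIM : A ∩ B ⊆ M := (Finset.inter_subset_right).trans hBM
        rw [hval A hA hxA, hfx1 B hBM,
          hval (A ∪ B) (Finset.union_subset hA hB) hxU,
          hfx1 (A ∩ B) hIM, Finset.erase_union_distrib,
          Finset.erase_eq_of_notMem hxB]
        have hIeq : A ∩ B = A.erase x ∩ B := by
          ext y
          simp only [Finset.mem_inter, Finset.mem_erase]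
          constructor
          · rintro ⟨h1, h2⟩
            exact ⟨⟨fun hyx => hxB (hyx ▸ h2), h1⟩, h2⟩
          · rintro ⟨⟨_, h1⟩, h2⟩
            exact ⟨h1, h2⟩
        rw [hIeq]
        have hAe := herx A hA
        have hsub := hfsub (A.erase x) B hAe hBM
        have hde := hedec (A.erase x) (A.erase x ∪ B) Finset.subset_union_left
          (Finset.union_subset hAe hBM)
        simp only [hg]
        linarith
      · -- x ∉ A, x ∈ B
        have hAM : A ⊆ M := hnx A hA hxA
        have hxU : x ∈ A ∪ B := Finset.mem_union_right _ hxB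
        have hxI : x ∉ A ∩ B := fun h => hxA (Finset.mem_inter.mp h).1
        have hIM : A ∩ B ⊆ M := (Finset.inter_subset_left).trans hAM
        rw [hfx1 A hAM, hval B hB hxB,
          hval (A ∪ B) (Finset.union_subset hA hB) hxU,
          hfx1 (A ∩ B) hIM, Finset.erase_union_distrib,
          Finset.erase_eq_of_notMem hxA]
        have hIeq : A ∩ B = A ∩ B.erase x := by
          ext y
          simp only [Finset.mem_inter, Finset.mem_erase]
          constructor
          · rintro ⟨h1, h2⟩
            exact ⟨h1, fun hyx => hxA (hyx ▸ h1), h2⟩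
          · rintro ⟨h1, _, h2⟩
            exact ⟨h1, h2⟩
        rw [hIeq]
        have hBe := herx B hB
        have hsub := hfsub A (B.erase x) hAM hBe
        have hde := hedec (B.erase x) (A ∪ B.erase x) Finset.subset_union_right
          (Finset.union_subset hAM hBe)
        simp only [hg]
        linarith
      · -- x ∉ A, x ∉ B
        have hAM : A ⊆ M := hnx A hA hxA
        have hBM : B ⊆ M := hnx B hB hxB
        have hxU : x ∉ A ∪ B := fun h => by
          rcases Finset.mem_union.mp h with h | h
          exacts [hxA h, hxB h]
        have hxI : x ∉ A ∩ B := fun h => hxA (Finset.mem_inter.mp h).1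
        rw [hfx1 A hAM, hfx1 B hBM,
          hfx1 (A ∪ B) (Finset.union_subset hAM hBM),
          hfx1 (A ∩ B) ((Finset.inter_subset_left).trans hAM)]
        exact hfsub A B hAM hBM
end
end

section
/- Let (f,M) be a polymatroid with |M| ≥ 2, let u,t ≥ 0, let x ∉ M, and define the excess function e_x by e_x(∅) = u+t and e_x(A) = u for every nonempty A ⊆ M. If t ≤ f(a,b) for all distinct a,b ∈ M, then the extension f_x (given by f_x(A) = f(A) and f_x(A∪{x}) = f(A)+e_x(A) for A ⊆ M) is a polymatroid on M∪{x}. -/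
open Finset

noncomputable section

variable {α : Type*} [DecidableEq α]

/-- Key lemma: for disjoint nonempty `A B ⊆ M`,
`t ≤ f A + f B - f (A ∪ B)`. -/
lemma key_disj (M : Finset α) (f : Finset α → ℝ) (hf : IsPolymatroid M f) (t : ℝ)
    (htf : ∀ a ∈ M, ∀ b ∈ M, a ≠ b → t ≤ pmi f {a} {b} ∅)
    {A B : Finset α} (hA : A ⊆ M) (hB : B ⊆ M) (hd : Disjoint A B)
    (hAne : A.Nonempty) (hBne : B.Nonempty) :
    t ≤ f A + f B - f (A ∪ B) := by
  obtain ⟨hf0, _, hmono, hsub⟩ := hf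
  obtain ⟨a, ha⟩ := hAne
  obtain ⟨b, hb⟩ := hBne
  have hab : a ≠ b := fun h => (Finset.disjoint_left.1 hd ha) (h ▸ hb)
  have hbA : b ∉ A := fun h => (Finset.disjoint_left.1 hd h) hb
  have hpair : ({a, b} : Finset α) ⊆ M := by
    intro c hc
    simp only [Finset.mem_insert, Finset.mem_singleton] at hc
    rcases hc with rfl | rfl
    · exact hA ha
    · exact hB hb
  have h1 := hsub A {a, b} hA hpair
  have e1 : A ∪ {a, b} = A ∪ {b} := by
    ext c
    simp only [Finset.mem_union, Finset.mem_insert, Finset.mem_singleton]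
    constructor
    · rintro (h | rfl | rfl)
      · exact Or.inl h
      · exact Or.inl ha
      · exact Or.inr rfl
    · rintro (h | rfl)
      · exact Or.inl h
      · exact Or.inr (Or.inr rfl)
  have e2 : A ∩ {a, b} = {a} := by
    ext c
    simp only [Finset.mem_inter, Finset.mem_insert, Finset.mem_singleton]
    constructor
    · rintro ⟨hc, rfl | rfl⟩
      · rfl
      · exact absurd hc hbA
    · rintro rfl
      exact ⟨ha, Or.inl rfl⟩
  rw [e1, e2] at h1
  have hAb : A ∪ {b} ⊆ M := by
    intro c hc
    rcases Finset.mem_union.1 hc with h | h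
    · exact hA h
    · rw [Finset.mem_singleton] at h; exact h ▸ hB hb
  have h2 := hsub (A ∪ {b}) B hAb hB
  have e3 : (A ∪ {b}) ∪ B = A ∪ B := by
    ext c
    simp only [Finset.mem_union, Finset.mem_singleton]
    constructor
    · rintro ((h | rfl) | h)
      · exact Or.inl h
      · exact Or.inr hb
      · exact Or.inr h
    · rintro (h | h)
      · exact Or.inl (Or.inl h)
      · exact Or.inr h
  have e4 : (A ∪ {b}) ∩ B = {b} := by
    ext c
    simp only [Finset.mem_inter, Finset.mem_union, Finset.mem_singleton]
    constructor
    · rintro ⟨h | rfl, hc⟩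
      · exact absurd hc (Finset.disjoint_left.1 hd h)
      · rfl
    · rintro rfl
      exact ⟨Or.inr rfl, hb⟩
  rw [e3, e4] at h2
  have h3 := htf a (hA ha) b (hB hb) hab
  simp only [pmi, Finset.union_empty, hf0] at h3
  rw [← Finset.insert_eq] at h3
  linarith

/-- `t ≤ f B` for any nonempty `B ⊆ M` with `|M| ≥ 2`. -/
lemma key_single (M : Finset α) (f : Finset α → ℝ) (hf : IsPolymatroid M f)
    (hM : 2 ≤ M.card) (t : ℝ)
    (htf : ∀ a ∈ M, ∀ b ∈ M, a ≠ b → t ≤ pmi f {a} {b} ∅)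
    {B : Finset α} (hB : B ⊆ M) (hBne : B.Nonempty) : t ≤ f B := by
  obtain ⟨hf0, _, hmono, hsub⟩ := hf
  obtain ⟨a, ha⟩ := hBne
  obtain ⟨b, hbM, hba⟩ := Finset.exists_mem_ne (by omega : 1 < M.card) a
  have h3 := htf a (hB ha) b hbM (fun h => hba (h ▸ rfl))
  simp only [pmi, Finset.union_empty, hf0] at h3
  rw [← Finset.insert_eq] at h3
  have hpair : ({a, b} : Finset α) ⊆ M := by
    intro c hc
    simp only [Finset.mem_insert, Finset.mem_singleton] at hc
    rcases hc with rfl | rfl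
    · exact hB ha
    · exact hbM
  have h4 : f {b} ≤ f {a, b} := hmono {b} {a, b} (by simp) hpair
  have h5 : f {a} ≤ f B := hmono {a} B (Finset.singleton_subset_iff.2 ha) hB
  linarith

/-- if `t ≤ f(a,b)` for all distinct `a,b ∈ M`, then the extension
with excess `e_x(∅) = u+t`, `e_x(A) = u` otherwise, is a polymatroid. -/
theorem statement_5 (M : Finset α) (f : Finset α → ℝ) (hf : IsPolymatroid M f)
    (hM : 2 ≤ M.card) (u t : ℝ) (hu : 0 ≤ u) (ht : 0 ≤ t)
    (x : α) (hx : x ∉ M)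
    (htf : ∀ a ∈ M, ∀ b ∈ M, a ≠ b → t ≤ pmi f {a} {b} ∅)
    (fx : Finset α → ℝ)
    (hfx1 : ∀ A ⊆ M, fx A = f A)
    (hfx2 : ∀ A ⊆ M, fx (A ∪ {x}) = f A + (if A = ∅ then u + t else u)) :
    IsPolymatroid (M ∪ {x}) fx := by
  obtain ⟨hf0, hfnn, hmono, hsub⟩ := hf
  have hf' : IsPolymatroid M f := ⟨hf0, hfnn, hmono, hsub⟩
  -- helper facts
  have hsubM : ∀ A : Finset α, A ⊆ M ∪ {x} → x ∉ A → A ⊆ M := by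
    intro A hA hxA c hc
    rcases Finset.mem_union.1 (hA hc) with h | h
    · exact h
    · rw [Finset.mem_singleton] at h; exact absurd (h ▸ hc) hxA
  have heraseM : ∀ A : Finset α, A ⊆ M ∪ {x} → A.erase x ⊆ M := by
    intro A hA c hc
    rcases Finset.mem_union.1 (hA (Finset.mem_of_mem_erase hc)) with h | h
    · exact h
    · rw [Finset.mem_singleton] at h
      exact absurd h (Finset.ne_of_mem_erase hc)
  have hins : ∀ A : Finset α, x ∈ A → A.erase x ∪ {x} = A := by
    intro A hxA
    rw [Finset.union_comm, ← Finset.insert_eq, Finset.insert_erase hxA]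
  refine ⟨?_, ?_, ?_, ?_⟩
  · rw [hfx1 ∅ (Finset.empty_subset M)]; exact hf0
  · -- nonnegativity
    intro A hA
    by_cases hxA : x ∈ A
    · rw [← hins A hxA, hfx2 _ (heraseM A hA)]
      have := hfnn _ (heraseM A hA)
      split_ifs <;> linarith
    · rw [hfx1 A (hsubM A hA hxA)]
      exact hfnn A (hsubM A hA hxA)
  · -- monotonicity
    intro A B hAB hBM
    by_cases hxB : x ∈ B
    · by_cases hxA : x ∈ A
      · have hB' := heraseM B hBM
        have hA' : A.erase x ⊆ M := fun c hc => hB' (Finset.erase_subset_erase x hAB hc)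
        rw [← hins A hxA, ← hins B hxB, hfx2 _ hA', hfx2 _ hB']
        have hm := hmono _ _ (Finset.erase_subset_erase x hAB) hB'
        split_ifs with h1 h2 h2
        · linarith
        · have hne : (B.erase x).Nonempty := Finset.nonempty_iff_ne_empty.2 h2
          have := key_single M f hf' hM t htf hB' hne
          rw [h1, hf0] at hm ⊢
          linarith
        · have : A.erase x = ∅ := Finset.subset_empty.1 (h2 ▸ Finset.erase_subset_erase x hAB)
          exact absurd this h1
        · linarith
      · have hB' := heraseM B hBM
        have hAM : A ⊆ M := hsubM A (hAB.trans hBM) hxA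
        have hAB' : A ⊆ B.erase x := Finset.subset_erase.2 ⟨hAB, hxA⟩
        rw [hfx1 A hAM, ← hins B hxB, hfx2 _ hB']
        have hm := hmono A _ hAB' hB'
        split_ifs <;> linarith
    · have hxA : x ∉ A := fun h => hxB (hAB h)
      have hBM' := hsubM B hBM hxB
      rw [hfx1 A (hAB.trans hBM'), hfx1 B hBM']
      exact hmono A B hAB hBM'
  · -- submodularity
    intro A B hA hB
    by_cases hxA : x ∈ A <;> by_cases hxB : x ∈ B
    · -- x in both
      set A' := A.erase x with hA'def
      set B' := B.erase x with hB'def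
      have hA' : A' ⊆ M := heraseM A hA
      have hB' : B' ⊆ M := heraseM B hB
      have hU : A ∪ B = (A' ∪ B') ∪ {x} := by
        rw [← hins A hxA, ← hins B hxB]
        ext c
        simp only [Finset.mem_union, Finset.mem_singleton]
        tauto
      have hI : A ∩ B = (A' ∩ B') ∪ {x} := by
        rw [← hins A hxA, ← hins B hxB]
        ext c
        simp only [Finset.mem_inter, Finset.mem_union, Finset.mem_singleton]
        tauto
      rw [hU, hI, ← hins A hxA, ← hins B hxB,
        hfx2 _ (Finset.union_subset hA' hB'),
        hfx2 _ ((Finset.inter_subset_left).trans hA'),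
        hfx2 _ hA', hfx2 _ hB']
      have hs := hsub A' B' hA' hB'
      by_cases h3 : A' = ∅
      · simp only [h3, Finset.empty_union, Finset.empty_inter]
        split_ifs <;> linarith
      · by_cases h4 : B' = ∅
        · simp only [h4, Finset.union_empty, Finset.inter_empty]
          split_ifs <;> linarith
        · have hune : A' ∪ B' ≠ ∅ := by
            intro h
            exact h3 (Finset.subset_empty.1 (h ▸ Finset.subset_union_left))
          rw [if_neg h3, if_neg h4, if_neg hune]
          split_ifs with h2
          · have hd : Disjoint A' B' := Finset.disjoint_iff_inter_eq_empty.2 h2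
            have hk := key_disj M f hf' t htf hA' hB' hd
              (Finset.nonempty_iff_ne_empty.2 h3) (Finset.nonempty_iff_ne_empty.2 h4)
            have hz : f (A' ∩ B') = 0 := by rw [h2, hf0]
            linarith
          · linarith
    · -- x in A only
      set A' := A.erase x with hA'def
      have hA' : A' ⊆ M := heraseM A hA
      have hBM : B ⊆ M := hsubM B hB hxB
      have hU : A ∪ B = (A' ∪ B) ∪ {x} := by
        rw [← hins A hxA]
        ext c
        simp only [Finset.mem_union, Finset.mem_singleton]
        tauto
      have hI : A ∩ B = A' ∩ B := by
        ext c
        simp only [hA'def, Finset.mem_inter, Finset.mem_erase]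
        constructor
        · rintro ⟨h1, h2⟩
          exact ⟨⟨fun h => hxB (h ▸ h2), h1⟩, h2⟩
        · rintro ⟨⟨_, h1⟩, h2⟩
          exact ⟨h1, h2⟩
      rw [hU, hI, ← hins A hxA,
        hfx2 _ (Finset.union_subset hA' hBM),
        hfx1 _ ((Finset.inter_subset_left).trans hA'),
        hfx2 _ hA', hfx1 B hBM]
      have hs := hsub A' B hA' hBM
      split_ifs with h1 h2
      · linarith
      · exact absurd (Finset.subset_empty.1 (h1 ▸ Finset.subset_union_left)) h2
      · linarith
      · linarith
    · -- x in B only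
      set B' := B.erase x with hB'def
      have hB' : B' ⊆ M := heraseM B hB
      have hAM : A ⊆ M := hsubM A hA hxA
      have hU : A ∪ B = (A ∪ B') ∪ {x} := by
        rw [← hins B hxB]
        ext c
        simp only [Finset.mem_union, Finset.mem_singleton]
        tauto
      have hI : A ∩ B = A ∩ B' := by
        ext c
        simp only [hB'def, Finset.mem_inter, Finset.mem_erase]
        constructor
        · rintro ⟨h1, h2⟩
          exact ⟨h1, fun h => hxA (h ▸ h1), h2⟩
        · rintro ⟨h1, _, h2⟩
          exact ⟨h1, h2⟩
      rw [hU, hI, ← hins B hxB,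
        hfx2 _ (Finset.union_subset hAM hB'),
        hfx1 _ ((Finset.inter_subset_left).trans hAM),
        hfx1 A hAM, hfx2 _ hB']
      have hs := hsub A B' hAM hB'
      split_ifs with h1 h2
      · linarith
      · exact absurd (Finset.subset_empty.1 (h1 ▸ Finset.subset_union_right)) h2
      · linarith
      · linarith
    · -- x in neither
      have hAM : A ⊆ M := hsubM A hA hxA
      have hBM : B ⊆ M := hsubM B hB hxB
      rw [hfx1 A hAM, hfx1 B hBM, hfx1 _ (Finset.union_subset hAM hBM),
        hfx1 _ ((Finset.inter_subset_left).trans hAM)]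
      exact hsub A B hAM hBM
end
end

section
/- Let (f,M) be a polymatroid, c ∈ M with |M∖{c}| ≥ 2, let u,t ≥ 0, let x ∉ M, and define the excess function e_x by e_x(A) = u+t if A = ∅ or A = {c}, and e_x(A) = u for all other A ⊆ M. If t ≤ f(a,b) and t ≤ f(a,b|c) for all distinct a,b ∈ M∖{c}, then the extension f_x (given by f_x(A) = f(A) and f_x(A∪{x}) = f(A)+e_x(A) for A ⊆ M) is a polymatroid on M∪{x}. -/
open Finset

noncomputable section

variable {α : Type*} [DecidableEq α]

/-!
Adjoining `x` with excess `e` yields a polymatroid as soon as `e ≥ 0`, `e` is antitone and `f + e`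
is monotone and submodular on `M`. For the excess `u + t` on `∅, {c}` and `u` elsewhere, these are
inherited from `f` except when a set `A ⊆ {c}` grows to a set `B ⊄ {c}`, or when two sets
`A, B ⊄ {c}` meet inside `{c}`. There the loss of `t` is paid for by `t ≤ f(a,b|K)` with
`K = ∅` or `K = {c}`, because `f(I,J|K)` is monotone in `I` and `J`.
-/

theorem pmi_comm (f : Finset α → ℝ) (I J K : Finset α) : pmi f I J K = pmi f J I K := by
  simp only [pmi, union_comm I J]
  ring

theorem pmi_of_subset_of_subset (f : Finset α → ℝ) {I J K : Finset α} (hKI : K ⊆ I)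
    (hKJ : K ⊆ J) : pmi f I J K = f I + f J - f (I ∪ J) - f K := by
  rw [pmi, union_eq_left.mpr hKI, union_eq_left.mpr hKJ,
    union_eq_left.mpr (hKI.trans subset_union_left)]

namespace IsPolymatroid

variable {M : Finset α} {f : Finset α → ℝ}

theorem of_monotone {g : Finset α → ℝ} (h0 : g ∅ = 0)
    (hmono : ∀ A B, A ⊆ B → B ⊆ M → g A ≤ g B)
    (hsub : ∀ A B, A ⊆ M → B ⊆ M → g (A ∪ B) + g (A ∩ B) ≤ g A + g B) :
    IsPolymatroid M g :=
  ⟨h0, fun A hA => h0 ▸ hmono ∅ A (empty_subset A) hA, hmono, hsub⟩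

theorem union_add_le_add_union (hf : IsPolymatroid M f) {X Y Z : Finset α} (hXY : X ⊆ Y)
    (hY : Y ⊆ M) (hZ : Z ⊆ M) : f (Y ∪ Z) + f X ≤ f Y + f (X ∪ Z) := by
  have hsub := hf.2.2.2 Y (X ∪ Z) hY (union_subset (hXY.trans hY) hZ)
  have hmono : f X ≤ f (Y ∩ (X ∪ Z)) :=
    hf.2.2.1 _ _ (subset_inter hXY subset_union_left) (inter_subset_left.trans hY)
  rw [← union_assoc, union_eq_left.mpr hXY] at hsub
  linarith

theorem pmi_mono_left (hf : IsPolymatroid M f) {I I' J K : Finset α} (hI : I ⊆ I')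
    (hI' : I' ⊆ M) (hJ : J ⊆ M) (hK : K ⊆ M) : pmi f I J K ≤ pmi f I' J K := by
  have h := hf.union_add_le_add_union (union_subset_union_left hI : I ∪ K ⊆ I' ∪ K)
    (union_subset hI' hK) hJ
  simp only [pmi, union_right_comm _ K J] at h ⊢
  linarith

theorem pmi_mono (hf : IsPolymatroid M f) {I I' J J' K : Finset α} (hI : I ⊆ I') (hJ : J ⊆ J')
    (hI' : I' ⊆ M) (hJ' : J' ⊆ M) (hK : K ⊆ M) : pmi f I J K ≤ pmi f I' J' K :=
  calc pmi f I J K ≤ pmi f I' J K := hf.pmi_mono_left hI hI' (hJ.trans hJ') hK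
    _ = pmi f J I' K := pmi_comm f I' J K
    _ ≤ pmi f J' I' K := hf.pmi_mono_left hJ hJ' hI' hK
    _ = pmi f I' J' K := pmi_comm f J' I' K

theorem pmi_le_pcd (hf : IsPolymatroid M f) {I J K : Finset α} (hI : I ⊆ M) (hJ : J ⊆ M)
    (hK : K ⊆ M) : pmi f I J K ≤ pcd f I K := by
  have := hf.2.2.1 (J ∪ K) (I ∪ J ∪ K) (by intro y; simp only [mem_union]; tauto)
    (union_subset (union_subset hI hJ) hK)
  simp only [pmi, pcd]
  linarith

end IsPolymatroid

theorem exists_subset_eq_or_union_singleton_eq {M S : Finset α} {x : α} (hS : S ⊆ M ∪ {x}) :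
    ∃ A ⊆ M, A = S ∨ A ∪ {x} = S := by
  refine ⟨S.erase x, ?_, ?_⟩
  · rw [union_comm, ← insert_eq] at hS
    exact subset_insert_iff.mp hS
  · by_cases hxS : x ∈ S
    · right; rw [union_comm, ← insert_eq, insert_erase hxS]
    · left; exact erase_eq_of_notMem hxS

section Extension

variable {M : Finset α} {f e fx : Finset α → ℝ} {x : α}

theorem IsPolymatroid.extension (hf : IsPolymatroid M f) (hx : x ∉ M)
    (hfx1 : ∀ A ⊆ M, fx A = f A) (hfx2 : ∀ A ⊆ M, fx (A ∪ {x}) = f A + e A)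
    (he_nonneg : ∀ A ⊆ M, 0 ≤ e A) (he_anti : ∀ A B, A ⊆ B → B ⊆ M → e B ≤ e A)
    (hfe_mono : ∀ A B, A ⊆ B → B ⊆ M → f A + e A ≤ f B + e B)
    (hfe_sub : ∀ A B, A ⊆ M → B ⊆ M →
      f (A ∪ B) + e (A ∪ B) + (f (A ∩ B) + e (A ∩ B)) ≤ f A + e A + (f B + e B)) :
    IsPolymatroid (M ∪ {x}) fx := by
  obtain ⟨hf0, -, hf_mono, hf_sub⟩ := hf
  have hxA : ∀ {A}, A ⊆ M → x ∉ A := fun hA hxA => hx (hA hxA)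
  have hsub_of_union {A B : Finset α} (hA : A ⊆ M) (h : A ⊆ B ∪ {x}) : A ⊆ B := by
    rw [union_comm, ← insert_eq] at h
    exact (subset_insert_iff_of_notMem (hxA hA)).mp h
  have hmixed {A B : Finset α} (hA : A ⊆ M) (hB : B ⊆ M) :
      fx ((A ∪ {x}) ∪ B) + fx ((A ∪ {x}) ∩ B) ≤ fx (A ∪ {x}) + fx B := by
    rw [union_right_comm, union_inter_distrib_right,
      singleton_inter_of_notMem (hxA hB), union_empty, hfx2 _ (union_subset hA hB),
      hfx1 _ (inter_subset_left.trans hA), hfx2 _ hA, hfx1 _ hB]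
    linarith [hf_sub A B hA hB, he_anti A (A ∪ B) subset_union_left (union_subset hA hB)]
  refine .of_monotone (by rw [hfx1 ∅ (empty_subset M), hf0]) ?_ ?_
  · intro S T hST hT
    obtain ⟨B, hB, rfl | rfl⟩ := exists_subset_eq_or_union_singleton_eq hT <;>
      obtain ⟨A, hA, rfl | rfl⟩ := exists_subset_eq_or_union_singleton_eq (hST.trans hT)
    · rw [hfx1 A hA, hfx1 B hB]; exact hf_mono A B hST hB
    · exact absurd (hST (mem_union_right A (mem_singleton_self x))) (hxA hB)
    · rw [hfx1 A hA, hfx2 B hB]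
      linarith [hf_mono A B (hsub_of_union hA hST) hB, he_nonneg B hB]
    · rw [hfx2 A hA, hfx2 B hB]
      exact hfe_mono A B (hsub_of_union hA (subset_union_left.trans hST)) hB
  · intro S T hS hT
    obtain ⟨A, hA, rfl | rfl⟩ := exists_subset_eq_or_union_singleton_eq hS <;>
      obtain ⟨B, hB, rfl | rfl⟩ := exists_subset_eq_or_union_singleton_eq hT
    · rw [hfx1 A hA, hfx1 B hB, hfx1 _ (union_subset hA hB), hfx1 _ (inter_subset_left.trans hA)]
      exact hf_sub A B hA hB
    · rw [union_comm, inter_comm, add_comm (fx A)]; exact hmixed hB hA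
    · exact hmixed hA hB
    · rw [← union_union_distrib_right, ← inter_union_distrib_right, hfx2 _ (union_subset hA hB),
        hfx2 _ (inter_subset_left.trans hA), hfx2 A hA, hfx2 B hB]
      exact hfe_sub A B hA hB

end Extension

def singletonExcess (c : α) (u t : ℝ) (A : Finset α) : ℝ := if A ⊆ {c} then u + t else u

section SingletonExcess

variable {M : Finset α} {f : Finset α → ℝ} {c : α} {u t : ℝ}

theorem singletonExcess_nonneg (hu : 0 ≤ u) (ht : 0 ≤ t) (A : Finset α) :
    0 ≤ singletonExcess c u t A := by
  unfold singletonExcess; split_ifs <;> linarith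

theorem singletonExcess_anti (ht : 0 ≤ t) {A B : Finset α} (hAB : A ⊆ B) :
    singletonExcess c u t B ≤ singletonExcess c u t A := by
  unfold singletonExcess
  split_ifs with hB hA hA
  exacts [le_rfl, absurd (hAB.trans hB) hA, by linarith, le_rfl]

variable (hf : IsPolymatroid M f)
  (htK : ∀ K ⊆ {c}, ∀ a ∈ M \ {c}, ∀ b ∈ M \ {c}, a ≠ b → t ≤ pmi f {a} {b} K)
include hf htK

theorem IsPolymatroid.le_pmi {I J K : Finset α} (hI : I ⊆ M) (hJ : J ⊆ M) (hKM : K ⊆ M)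
    (hK : K ⊆ {c}) {a b : α} (ha : a ∈ I \ {c}) (hb : b ∈ J \ {c}) (hab : a ≠ b) :
    t ≤ pmi f I J K := by
  have hsdiff {X : Finset α} (hX : X ⊆ M) : X \ {c} ⊆ M \ {c} := sdiff_subset_sdiff hX le_rfl
  calc t ≤ pmi f {a} {b} K := htK K hK a (hsdiff hI ha) b (hsdiff hJ hb) hab
    _ ≤ pmi f I J K := hf.pmi_mono (singleton_subset_iff.mpr (mem_sdiff.mp ha).1)
        (singleton_subset_iff.mpr (mem_sdiff.mp hb).1) hI hJ hKM

theorem IsPolymatroid.add_le_of_subset_singleton (hM : 2 ≤ (M \ {c}).card) {A B : Finset α}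
    (hAB : A ⊆ B) (hB : B ⊆ M) (hAc : A ⊆ {c}) (hBc : ¬ B ⊆ {c}) : f A + t ≤ f B := by
  obtain ⟨a, haB, hac⟩ := not_subset.mp hBc
  obtain ⟨b, hb, hba⟩ := exists_mem_ne hM a
  have hbM : {b} ⊆ M := singleton_subset_iff.mpr (mem_sdiff.mp hb).1
  have h := calc
    t ≤ pmi f B {b} A := hf.le_pmi htK hB hbM (hAB.trans hB) hAc (mem_sdiff.mpr ⟨haB, hac⟩)
        (mem_sdiff.mpr ⟨mem_singleton_self b, (mem_sdiff.mp hb).2⟩) hba.symm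
    _ ≤ pcd f B A := hf.pmi_le_pcd hB hbM (hAB.trans hB)
    _ = f B - f A := by rw [pcd, union_eq_left.mpr hAB]
  linarith

theorem IsPolymatroid.union_add_inter_add_le {A B : Finset α} (hA : A ⊆ M) (hB : B ⊆ M)
    (hAc : ¬ A ⊆ {c}) (hBc : ¬ B ⊆ {c}) (hABc : A ∩ B ⊆ {c}) :
    f (A ∪ B) + f (A ∩ B) + t ≤ f A + f B := by
  obtain ⟨a, haA, hac⟩ := not_subset.mp hAc
  obtain ⟨b, hbB, hbc⟩ := not_subset.mp hBc
  have hab : a ≠ b := by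
    rintro rfl
    exact hac (hABc (mem_inter.mpr ⟨haA, hbB⟩))
  have h := hf.le_pmi htK hA hB (inter_subset_left.trans hA) hABc (mem_sdiff.mpr ⟨haA, hac⟩)
    (mem_sdiff.mpr ⟨hbB, hbc⟩) hab
  rw [pmi_of_subset_of_subset f inter_subset_left inter_subset_right] at h
  linarith

theorem IsPolymatroid.add_singletonExcess_mono (hM : 2 ≤ (M \ {c}).card) {A B : Finset α}
    (hAB : A ⊆ B) (hB : B ⊆ M) :
    f A + singletonExcess c u t A ≤ f B + singletonExcess c u t B := by
  have hmono := hf.2.2.1 A B hAB hB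
  unfold singletonExcess
  split_ifs with hAc hBc hBc
  · linarith
  · linarith [hf.add_le_of_subset_singleton htK hM hAB hB hAc hBc]
  · exact absurd (hAB.trans hBc) hAc
  · linarith

theorem IsPolymatroid.add_singletonExcess_submod {A B : Finset α} (hA : A ⊆ M)
    (hB : B ⊆ M) :
    f (A ∪ B) + singletonExcess c u t (A ∪ B) + (f (A ∩ B) + singletonExcess c u t (A ∩ B)) ≤
      f A + singletonExcess c u t A + (f B + singletonExcess c u t B) := by
  have hsub := hf.2.2.2 A B hA hB
  unfold singletonExcess
  by_cases hAc : A ⊆ {c} <;> by_cases hBc : B ⊆ {c}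
  · simp only [hAc, hBc, union_subset hAc hBc, inter_subset_left.trans hAc, if_true]
    linarith
  · have hABc : ¬ A ∪ B ⊆ {c} := fun h => hBc (subset_union_right.trans h)
    simp only [hAc, hBc, hABc, inter_subset_left.trans hAc, if_true, if_false]
    linarith
  · have hABc : ¬ A ∪ B ⊆ {c} := fun h => hAc (subset_union_left.trans h)
    simp only [hAc, hBc, hABc, inter_subset_right.trans hBc, if_true, if_false]
    linarith
  · have hABc : ¬ A ∪ B ⊆ {c} := fun h => hAc (subset_union_left.trans h)
    simp only [hAc, hBc, hABc, if_false]
    split_ifs with hiC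
    · linarith [hf.union_add_inter_add_le htK hA hB hAc hBc hiC]
    · linarith

end SingletonExcess

theorem statement_6_general (M : Finset α) (f : Finset α → ℝ) (hf : IsPolymatroid M f)
    (c : α) (hM : 2 ≤ (M \ {c}).card)
    (u t : ℝ) (hu : 0 ≤ u) (ht : 0 ≤ t)
    (x : α) (hx : x ∉ M)
    (htf : ∀ a ∈ M \ {c}, ∀ b ∈ M \ {c}, a ≠ b →
      t ≤ pmi f {a} {b} ∅ ∧ t ≤ pmi f {a} {b} {c})
    (fx : Finset α → ℝ)
    (hfx1 : ∀ A ⊆ M, fx A = f A)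
    (hfx2 : ∀ A ⊆ M, fx (A ∪ {x}) = f A + (if A = ∅ ∨ A = {c} then u + t else u)) :
    IsPolymatroid (M ∪ {x}) fx := by
  have htK : ∀ K ⊆ {c}, ∀ a ∈ M \ {c}, ∀ b ∈ M \ {c}, a ≠ b → t ≤ pmi f {a} {b} K := by
    intro K hK a ha b hb hab
    rcases subset_singleton_iff.mp hK with rfl | rfl
    exacts [(htf a ha b hb hab).1, (htf a ha b hb hab).2]
  refine hf.extension (e := singletonExcess c u t) hx hfx1 ?_
    (fun A _ => singletonExcess_nonneg hu ht A) (fun A B hAB _ => singletonExcess_anti ht hAB)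
    (fun A B => hf.add_singletonExcess_mono htK hM) (fun A B => hf.add_singletonExcess_submod htK)
  intro A hA
  rw [hfx2 A hA, singletonExcess]
  simp only [subset_singleton_iff]

/-- if `t ≤ f(a,b)` and `t ≤ f(a,b|c)` for all distinct
`a,b ∈ M∖{c}`, then the extension with excess `e_x(A) = u+t` for `A = ∅` or
`A = {c}` and `e_x(A) = u` otherwise is a polymatroid. -/
theorem statement_6 (M : Finset α) (f : Finset α → ℝ) (hf : IsPolymatroid M f)
    (c : α) (hc : c ∈ M) (hM : 2 ≤ (M \ {c}).card)
    (u t : ℝ) (hu : 0 ≤ u) (ht : 0 ≤ t)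
    (x : α) (hx : x ∉ M)
    (htf : ∀ a ∈ M \ {c}, ∀ b ∈ M \ {c}, a ≠ b →
      t ≤ pmi f {a} {b} ∅ ∧ t ≤ pmi f {a} {b} {c})
    (fx : Finset α → ℝ)
    (hfx1 : ∀ A ⊆ M, fx A = f A)
    (hfx2 : ∀ A ⊆ M, fx (A ∪ {x}) = f A + (if A = ∅ ∨ A = {c} then u + t else u)) :
    IsPolymatroid (M ∪ {x}) fx :=
  statement_6_general M f hf c hM u t hu ht x hx htf fx hfx1 hfx2
end
end

section
/- Let M and X be disjoint finite sets and y ∉ M∪X. Let f_X be a polymatroid on M∪X and f_y a polymatroid on M∪{y}, with coinciding restrictions to subsets of M. Then f_X and f_y are adhesive if and only if f_X and f_y↓y have an amalgam, where f_y↓y = f_y − f_y(y|M)·r_{{y}} is the tightening of f_y at y. -/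
open Finset

noncomputable section

variable {α : Type*} [DecidableEq α]

/-- Polymatroids `fX` on `M ∪ X` and `fY` on `M ∪ Y` have an amalgam: a common
polymatroid extension on `M ∪ X ∪ Y`. -/
def HaveAmalgam (M X Y : Finset α) (fX fY : Finset α → ℝ) : Prop :=
  ∃ g : Finset α → ℝ, IsPolymatroid (M ∪ X ∪ Y) g ∧
    (∀ A, A ⊆ M ∪ X → g A = fX A) ∧ (∀ A, A ⊆ M ∪ Y → g A = fY A)

/-- Polymatroids `fX` on `M ∪ X` and `fY` on `M ∪ Y` are adhesive: they have a
modular common extension, i.e. one with `g(X,Y|M) = 0`. -/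
def Adhesive (M X Y : Finset α) (fX fY : Finset α → ℝ) : Prop :=
  ∃ g : Finset α → ℝ, IsPolymatroid (M ∪ X ∪ Y) g ∧
    (∀ A, A ⊆ M ∪ X → g A = fX A) ∧ (∀ A, A ⊆ M ∪ Y → g A = fY A) ∧
    pmi g X Y M = 0

/-!
Write `e = f_y(y|M)`. An adhesive extension `g` satisfies `g(y|M ∪ X) = g(y|M) = e`, and by
diminishing returns `e` is then the smallest increment of `g` at `y`; hence the tightening
`g − e·r_{y}` is still a polymatroid, and it is an amalgam of `f_X` and `f_y↓y`. Conversely, an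
amalgam `h` of `f_X` and `f_y↓y` has `h(y|M) = 0`, so `h(y|M ∪ X) = 0`, and `h + e·r_{y}` is a
polymatroid extending `f_X` and `f_y` in which `y` has increment `e` over both `M` and `M ∪ X`,
which is the modularity `g(X,y|M) = 0`.
-/

lemma runit_singleton (y : α) (A : Finset α) :
    runit {y} A = if y ∈ A then 1 else 0 := by
  by_cases h : y ∈ A
  · simp [runit, singleton_inter_of_mem h, h]
  · simp [runit, singleton_inter_of_notMem h, h]

lemma runit_singleton_of_mem {y : α} {A : Finset α} (h : y ∈ A) : runit {y} A = 1 := by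
  simp [runit_singleton, h]

lemma runit_singleton_of_notMem {y : α} {A : Finset α} (h : y ∉ A) : runit {y} A = 0 := by
  simp [runit_singleton, h]

lemma runit_mono (A : Finset α) {I J : Finset α} (hIJ : I ⊆ J) : runit A I ≤ runit A J := by
  unfold runit
  split_ifs with hI hJ hJ
  · rfl
  · exact absurd (hI.mono (inter_subset_inter_left hIJ)) hJ
  · exact zero_le_one
  · rfl

lemma runit_singleton_union_add_inter (y : α) (A B : Finset α) :
    runit {y} (A ∪ B) + runit {y} (A ∩ B) = runit {y} A + runit {y} B := by
  simp only [runit_singleton, mem_union, mem_inter]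
  split_ifs <;> simp_all

section Polymatroid

variable {N : Finset α} {f : Finset α → ℝ}

lemma pmi_eq_pcd_sub_pcd (f : Finset α → ℝ) (I J K : Finset α) :
    pmi f I J K = pcd f J K - pcd f J (I ∪ K) := by
  have hunion : J ∪ (I ∪ K) = I ∪ J ∪ K := by
    rw [← union_assoc, union_comm J I]
  rw [pmi, pcd, pcd, hunion]
  ring

lemma pcd_congr {g : Finset α → ℝ} (hfg : ∀ A ⊆ N, f A = g A) {J K : Finset α}
    (hJK : J ∪ K ⊆ N) : pcd f J K = pcd g J K := by
  rw [pcd, pcd, hfg _ hJK, hfg _ (subset_union_right.trans hJK)]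

lemma tightenAt_of_notMem (N : Finset α) (f : Finset α → ℝ) {a : α} {I : Finset α}
    (ha : a ∉ I) : tightenAt N f a I = f I := by
  simp [tightenAt, runit_singleton_of_notMem ha]

lemma tightenAt_union_singleton {M : Finset α} (f : Finset α → ℝ) {a : α} (ha : a ∉ M)
    (I : Finset α) : tightenAt (M ∪ {a}) f a I = f I - pcd f {a} M * runit {a} I := by
  rw [tightenAt, union_sdiff_cancel_right (disjoint_singleton_right.2 ha)]

lemma pcd_tightenAt_self (N : Finset α) (f : Finset α → ℝ) (a : α) :
    pcd (tightenAt N f a) {a} (N \ {a}) = 0 := by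
  simp [pcd, tightenAt, runit_singleton]

lemma pcd_add_mul_runit (f : Finset α → ℝ) (c : ℝ) {y : α} {S : Finset α} (hy : y ∉ S) :
    pcd (fun A => f A + c * runit {y} A) {y} S = pcd f {y} S + c := by
  simp only [pcd, runit_singleton_of_notMem hy,
    runit_singleton_of_mem (mem_union_left S (mem_singleton_self y))]
  ring

lemma IsPolymatroid.of_mono (h0 : f ∅ = 0)
    (hmono : ∀ A B, A ⊆ B → B ⊆ N → f A ≤ f B)
    (hsub : ∀ A B, A ⊆ N → B ⊆ N → f (A ∪ B) + f (A ∩ B) ≤ f A + f B) :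
    IsPolymatroid N f :=
  ⟨h0, fun A hA => h0 ▸ hmono ∅ A (empty_subset A) hA, hmono, hsub⟩

lemma IsPolymatroid.pcd_nonneg (hf : IsPolymatroid N f) {J K : Finset α} (hJK : J ∪ K ⊆ N) :
    0 ≤ pcd f J K :=
  sub_nonneg.2 (hf.2.2.1 K (J ∪ K) subset_union_right hJK)

lemma IsPolymatroid.pcd_le_pcd_of_subset (hf : IsPolymatroid N f) {J S T : Finset α}
    (hST : S ⊆ T) (hJT : J ∪ T ⊆ N) : pcd f J T ≤ pcd f J S := by
  have hT : T ⊆ N := subset_union_right.trans hJT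
  have hJS : J ∪ S ⊆ N := union_subset (subset_union_left.trans hJT) (hST.trans hT)
  have hsub := hf.2.2.2 (J ∪ S) T hJS hT
  rw [union_assoc, union_eq_right.2 hST] at hsub
  have hmono := hf.2.2.1 S ((J ∪ S) ∩ T) (subset_inter subset_union_right hST)
    (inter_subset_right.trans hT)
  rw [pcd, pcd]
  linarith

lemma IsPolymatroid.add_mul_runit (hf : IsPolymatroid N f) {c : ℝ} (hc : 0 ≤ c) (y : α) :
    IsPolymatroid N (fun A => f A + c * runit {y} A) := by
  obtain ⟨h0, -, hmono, hsub⟩ := hf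
  refine .of_mono (by simp [h0, runit_singleton]) (fun A B hAB hB => ?_) (fun A B hA hB => ?_)
  · exact add_le_add (hmono A B hAB hB) (mul_le_mul_of_nonneg_left (runit_mono _ hAB) hc)
  · linear_combination hsub A B hA hB + c * runit_singleton_union_add_inter y A B

lemma IsPolymatroid.tightenAt (hf : IsPolymatroid N f) (y : α) :
    IsPolymatroid N (tightenAt N f y) := by
  have h0 := hf.1
  have hmono := hf.2.2.1
  have hsub := hf.2.2.2
  set e := pcd f {y} (N \ {y})
  refine .of_mono (by simp [_root_.tightenAt, h0, runit_singleton]) (fun A B hAB hB => ?_)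
    (fun A B hA hB => ?_)
  · simp only [_root_.tightenAt]
    by_cases hyA : y ∈ A
    · simp only [runit_singleton_of_mem hyA, runit_singleton_of_mem (hAB hyA)]
      linarith [hmono A B hAB hB]
    by_cases hyB : y ∈ B
    · have hAB' : A ⊆ B \ {y} := subset_sdiff.2 ⟨hAB, disjoint_singleton_right.2 hyA⟩
      have hincr : e ≤ pcd f {y} (B \ {y}) :=
        hf.pcd_le_pcd_of_subset (sdiff_subset_sdiff hB le_rfl)
          (union_subset (singleton_subset_iff.2 (hB hyB)) sdiff_subset)
      rw [pcd, union_sdiff_of_subset (singleton_subset_iff.2 hyB)] at hincr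
      simp only [runit_singleton_of_notMem hyA, runit_singleton_of_mem hyB]
      linarith [hmono A (B \ {y}) hAB' (sdiff_subset.trans hB)]
    · simp only [runit_singleton_of_notMem hyA, runit_singleton_of_notMem hyB]
      linarith [hmono A B hAB hB]
  · simp only [_root_.tightenAt]
    linear_combination hsub A B hA hB - e * runit_singleton_union_add_inter y A B

end Polymatroid

section Amalgam

variable {M X : Finset α} {y : α} {fX fy : Finset α → ℝ}

lemma haveAmalgam_tightenAt_of_adhesive (hy : y ∉ M ∪ X) (hadh : Adhesive M X {y} fX fy) :
    HaveAmalgam M X {y} fX (tightenAt (M ∪ {y}) fy y) := by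
  obtain ⟨g, hg, hgX, hgy, hmod⟩ := hadh
  have hyM : y ∉ M := fun h => hy (mem_union_left X h)
  have hincr : pcd g {y} (M ∪ X) = pcd fy {y} M := by
    rw [pmi_eq_pcd_sub_pcd, sub_eq_zero, union_comm X M] at hmod
    rw [← hmod, pcd_congr hgy (union_comm _ _).subset]
  refine ⟨tightenAt (M ∪ X ∪ {y}) g y, hg.tightenAt y, fun A hA => ?_, fun A hA => ?_⟩
  · rw [tightenAt_of_notMem _ _ (fun h => hy (hA h)), hgX A hA]
  · rw [tightenAt_union_singleton _ hy, tightenAt_union_singleton _ hyM, hgy A hA, hincr]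

lemma adhesive_of_haveAmalgam_tightenAt (hy : y ∉ M ∪ X) (hfy : IsPolymatroid (M ∪ {y}) fy)
    (hamalg : HaveAmalgam M X {y} fX (tightenAt (M ∪ {y}) fy y)) : Adhesive M X {y} fX fy := by
  obtain ⟨g, hg, hgX, hgy⟩ := hamalg
  have hyM : y ∉ M := fun h => hy (mem_union_left X h)
  have hyXM : y ∉ X ∪ M := union_comm M X ▸ hy
  set e := pcd fy {y} M
  have he : 0 ≤ e := hfy.pcd_nonneg (union_comm _ _).subset
  have hloop : pcd g {y} M = 0 := by
    have := pcd_tightenAt_self (M ∪ {y}) fy y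
    rwa [union_sdiff_cancel_right (disjoint_singleton_right.2 hyM),
      ← pcd_congr hgy (union_comm _ _).subset] at this
  have hground : {y} ∪ (X ∪ M) ⊆ M ∪ X ∪ {y} := by rw [union_comm, union_comm X]
  have hloop' : pcd g {y} (X ∪ M) = 0 :=
    le_antisymm (hloop ▸ hg.pcd_le_pcd_of_subset subset_union_right hground)
      (hg.pcd_nonneg hground)
  refine ⟨fun A => g A + e * runit {y} A, hg.add_mul_runit he y, fun A hA => ?_,
    fun A hA => ?_, ?_⟩
  · simp only [runit_singleton_of_notMem (fun h => hy (hA h)), hgX A hA]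
    ring
  · simp only [hgy A hA, tightenAt_union_singleton _ hyM]
    ring
  · rw [pmi_eq_pcd_sub_pcd, pcd_add_mul_runit _ _ hyM, pcd_add_mul_runit _ _ hyXM, hloop, hloop']
    ring

end Amalgam

theorem statement_7_general (M X : Finset α) (y : α)
    (hy : y ∉ M ∪ X)
    (fX fy : Finset α → ℝ)
    (hfy : IsPolymatroid (M ∪ {y}) fy) :
    Adhesive M X {y} fX fy ↔ HaveAmalgam M X {y} fX (tightenAt (M ∪ {y}) fy y) :=
  ⟨haveAmalgam_tightenAt_of_adhesive hy, adhesive_of_haveAmalgam_tightenAt hy hfy⟩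

/-- `f_X` and `f_y` are adhesive iff `f_X` and the tightening
`f_y↓y` have an amalgam. -/
theorem statement_7 (M X : Finset α) (y : α)
    (hMX : Disjoint M X) (hy : y ∉ M ∪ X)
    (fX fy : Finset α → ℝ)
    (hfX : IsPolymatroid (M ∪ X) fX) (hfy : IsPolymatroid (M ∪ {y}) fy)
    (hcommon : ∀ A ⊆ M, fX A = fy A) :
    Adhesive M X {y} fX fy ↔ HaveAmalgam M X {y} fX (tightenAt (M ∪ {y}) fy y) :=
  statement_7_general M X y hy fX fy hfy
end
end

section
/- A polymatroid f on the two-element ground set {a,b} is 2-sticky if and only if f(a,b) = 0 (f is modular), or f(a|b) = 0, or f(b|a) = 0. -/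
open Finset

noncomputable section

variable {α : Type*} [DecidableEq α]

-- diminishing returns
lemma dimin {G : Finset α} {fX : Finset α → ℝ} (h : IsPolymatroid G fX)
    {S A J : Finset α} (hSA : S ⊆ A) (hA : A ⊆ G) (hJ : J ⊆ G) :
    fX (A ∪ J) - fX A ≤ fX (S ∪ J) - fX S := by
  obtain ⟨-, -, hmono, hsub⟩ := h
  have h1 := hsub A (S ∪ J) hA (union_subset (hSA.trans hA) hJ)
  have h2 : A ∪ (S ∪ J) = A ∪ J := by
    rw [← union_assoc, union_eq_left.2 hSA]
  have h3 : S ⊆ A ∩ (S ∪ J) := subset_inter hSA subset_union_left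
  have h4 : fX S ≤ fX (A ∩ (S ∪ J)) := hmono _ _ h3 (inter_subset_left.trans hA)
  rw [h2] at h1
  linarith

/-- General amalgam construction over a modular sublattice 𝒞 of P(M). -/
lemma amalgam_of_lattice (M X Y : Finset α) (f fX fY : Finset α → ℝ)
    (hMY : Disjoint M Y) (hXY : Disjoint X Y) (hMX : Disjoint M X)
    (hpX : IsPolymatroid (M ∪ X) fX) (hpY : IsPolymatroid (M ∪ Y) fY)
    (heX : ∀ A ⊆ M, fX A = f A) (heY : ∀ A ⊆ M, fY A = f A)
    (𝒞 : Finset (Finset α)) (hM𝒞 : M ∈ 𝒞) (h𝒞M : ∀ J ∈ 𝒞, J ⊆ M)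
    (hlat : ∀ J₁ ∈ 𝒞, ∀ J₂ ∈ 𝒞, J₁ ∪ J₂ ∈ 𝒞 ∧ J₁ ∩ J₂ ∈ 𝒞 ∧
      f (J₁ ∪ J₂) + f (J₁ ∩ J₂) = f J₁ + f J₂)
    (hcl : ∀ S ⊆ M, ∃ J ∈ 𝒞, S ⊆ J ∧ f J = f S) :
    ∃ g : Finset α → ℝ, IsPolymatroid (M ∪ X ∪ Y) g ∧
      (∀ A, A ⊆ M ∪ X → g A = fX A) ∧ (∀ A, A ⊆ M ∪ Y → g A = fY A) := by
  obtain ⟨hX0, hXnn, hXmono, hXsub⟩ := hpX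
  obtain ⟨hY0, hYnn, hYmono, hYsub⟩ := hpY
  set e : Finset α → Finset α → ℝ :=
    fun I J => fX ((I ∩ X) ∪ J) + fY ((I ∩ Y) ∪ J) - f J with he
  have hne : ∀ I : Finset α, ((𝒞.filter (fun J => I ∩ M ⊆ J))).Nonempty :=
    fun I => ⟨M, mem_filter.2 ⟨hM𝒞, inter_subset_right⟩⟩
  set g : Finset α → ℝ := fun I => (𝒞.filter (fun J => I ∩ M ⊆ J)).inf' (hne I) (e I) with hg
  -- basic facts
  have hXJ : ∀ I J, J ⊆ M → (I ∩ X) ∪ J ⊆ M ∪ X := fun I J hJ =>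
    union_subset (inter_subset_right.trans subset_union_right) (hJ.trans subset_union_left)
  have hYJ : ∀ I J, J ⊆ M → (I ∩ Y) ∪ J ⊆ M ∪ Y := fun I J hJ =>
    union_subset (inter_subset_right.trans subset_union_right) (hJ.trans subset_union_left)
  have hfJnn : ∀ J ∈ 𝒞, 0 ≤ f J := by
    intro J hJ
    rw [← heX J (h𝒞M J hJ)]
    exact hXnn J ((h𝒞M J hJ).trans subset_union_left)
  have he_ge : ∀ I J, J ∈ 𝒞 → f J ≤ e I J := by
    intro I J hJ
    have hJM := h𝒞M J hJ
    have h1 : fX J ≤ fX ((I ∩ X) ∪ J) := hXmono _ _ subset_union_right (hXJ I J hJM)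
    have h2 : fY J ≤ fY ((I ∩ Y) ∪ J) := hYmono _ _ subset_union_right (hYJ I J hJM)
    rw [heX J hJM] at h1
    rw [heY J hJM] at h2
    simp only [he]
    linarith
  refine ⟨g, ⟨?_, ?_, ?_, ?_⟩, ?_, ?_⟩
  · -- g ∅ = 0
    obtain ⟨J, hJ𝒞, -, hJf⟩ := hcl ∅ (empty_subset M)
    have hf0 : f ∅ = 0 := by rw [← heX ∅ (empty_subset M), hX0]
    apply le_antisymm
    · show (filter (fun J => ∅ ∩ M ⊆ J) 𝒞).inf' _ (e ∅) ≤ 0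
      refine le_trans (inf'_le _ (mem_filter.2 ⟨hJ𝒞, by simp⟩)) ?_
      have hJM := h𝒞M J hJ𝒞
      simp only [he, empty_inter, empty_union]
      rw [heX J hJM, heY J hJM, hJf, hf0]
      simp
    · exact le_inf' _ _ fun J hJ => (hfJnn J (mem_filter.1 hJ).1).trans (he_ge ∅ J (mem_filter.1 hJ).1)
  · -- nonneg
    intro A _
    exact le_inf' _ _ fun J hJ => (hfJnn J (mem_filter.1 hJ).1).trans (he_ge A J (mem_filter.1 hJ).1)
  · -- monotone
    intro A B hAB _
    obtain ⟨J, hJ, hJeq⟩ := exists_mem_eq_inf' (hne B) (e B)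
    rw [hg]
    simp only []
    rw [hJeq]
    obtain ⟨hJ𝒞, hJB⟩ := mem_filter.1 hJ
    have hJM := h𝒞M J hJ𝒞
    have hJA : A ∩ M ⊆ J := (inter_subset_inter hAB Subset.rfl).trans hJB
    refine le_trans (inf'_le _ (mem_filter.2 ⟨hJ𝒞, hJA⟩)) ?_
    have h1 : fX ((A ∩ X) ∪ J) ≤ fX ((B ∩ X) ∪ J) :=
      hXmono _ _ (union_subset_union_left (inter_subset_inter hAB Subset.rfl)) (hXJ B J hJM)
    have h2 : fY ((A ∩ Y) ∪ J) ≤ fY ((B ∩ Y) ∪ J) :=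
      hYmono _ _ (union_subset_union_left (inter_subset_inter hAB Subset.rfl)) (hYJ B J hJM)
    simp only [he]; linarith
  · -- submodular
    intro A B _ _
    obtain ⟨JA, hJA, hJAeq⟩ := exists_mem_eq_inf' (hne A) (e A)
    obtain ⟨JB, hJB, hJBeq⟩ := exists_mem_eq_inf' (hne B) (e B)
    obtain ⟨hJA𝒞, hJAA⟩ := mem_filter.1 hJA
    obtain ⟨hJB𝒞, hJBB⟩ := mem_filter.1 hJB
    obtain ⟨hu𝒞, hi𝒞, hmodf⟩ := hlat JA hJA𝒞 JB hJB𝒞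
    have hJAM := h𝒞M JA hJA𝒞
    have hJBM := h𝒞M JB hJB𝒞
    have huM : JA ∪ JB ⊆ M := union_subset hJAM hJBM
    have hiM : JA ∩ JB ⊆ M := inter_subset_left.trans hJAM
    have hUae : (A ∪ B) ∩ M ⊆ JA ∪ JB := by
      rw [union_inter_distrib_right]; exact union_subset_union hJAA hJBB
    have hIae : (A ∩ B) ∩ M ⊆ JA ∩ JB := by
      refine subset_inter ?_ ?_
      · exact (inter_subset_inter inter_subset_left Subset.rfl).trans hJAA
      · exact (inter_subset_inter inter_subset_right Subset.rfl).trans hJBB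
    have hgU : g (A ∪ B) ≤ e (A ∪ B) (JA ∪ JB) := inf'_le _ (mem_filter.2 ⟨hu𝒞, hUae⟩)
    have hgI : g (A ∩ B) ≤ e (A ∩ B) (JA ∩ JB) := inf'_le _ (mem_filter.2 ⟨hi𝒞, hIae⟩)
    -- fX part
    have hfXsub : fX (((A ∪ B) ∩ X) ∪ (JA ∪ JB)) + fX (((A ∩ B) ∩ X) ∪ (JA ∩ JB)) ≤
        fX ((A ∩ X) ∪ JA) + fX ((B ∩ X) ∪ JB) := by
      have hP := hXsub ((A ∩ X) ∪ JA) ((B ∩ X) ∪ JB) (hXJ A JA hJAM) (hXJ B JB hJBM)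
      have hUeq : ((A ∩ X) ∪ JA) ∪ ((B ∩ X) ∪ JB) = ((A ∪ B) ∩ X) ∪ (JA ∪ JB) := by
        rw [union_inter_distrib_right]; ac_rfl
      have hIsub : ((A ∩ B) ∩ X) ∪ (JA ∩ JB) ⊆ ((A ∩ X) ∪ JA) ∩ ((B ∩ X) ∪ JB) := by
        refine union_subset (subset_inter ?_ ?_) (inter_subset_inter subset_union_right subset_union_right)
        · exact ((inter_subset_inter inter_subset_left Subset.rfl)).trans subset_union_left
        · exact ((inter_subset_inter inter_subset_right Subset.rfl)).trans subset_union_left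
      have hImono : fX (((A ∩ B) ∩ X) ∪ (JA ∩ JB)) ≤ fX (((A ∩ X) ∪ JA) ∩ ((B ∩ X) ∪ JB)) :=
        hXmono _ _ hIsub (inter_subset_left.trans (hXJ A JA hJAM))
      rw [hUeq] at hP
      linarith
    have hfYsub : fY (((A ∪ B) ∩ Y) ∪ (JA ∪ JB)) + fY (((A ∩ B) ∩ Y) ∪ (JA ∩ JB)) ≤
        fY ((A ∩ Y) ∪ JA) + fY ((B ∩ Y) ∪ JB) := by
      have hP := hYsub ((A ∩ Y) ∪ JA) ((B ∩ Y) ∪ JB) (hYJ A JA hJAM) (hYJ B JB hJBM)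
      have hUeq : ((A ∩ Y) ∪ JA) ∪ ((B ∩ Y) ∪ JB) = ((A ∪ B) ∩ Y) ∪ (JA ∪ JB) := by
        rw [union_inter_distrib_right]; ac_rfl
      have hIsub : ((A ∩ B) ∩ Y) ∪ (JA ∩ JB) ⊆ ((A ∩ Y) ∪ JA) ∩ ((B ∩ Y) ∪ JB) := by
        refine union_subset (subset_inter ?_ ?_) (inter_subset_inter subset_union_right subset_union_right)
        · exact ((inter_subset_inter inter_subset_left Subset.rfl)).trans subset_union_left
        · exact ((inter_subset_inter inter_subset_right Subset.rfl)).trans subset_union_left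
      have hImono : fY (((A ∩ B) ∩ Y) ∪ (JA ∩ JB)) ≤ fY (((A ∩ Y) ∪ JA) ∩ ((B ∩ Y) ∪ JB)) :=
        hYmono _ _ hIsub (inter_subset_left.trans (hYJ A JA hJAM))
      rw [hUeq] at hP
      linarith
    have : g A = e A JA := hJAeq
    have : g B = e B JB := hJBeq
    simp only [he] at hgU hgI hJAeq hJBeq ⊢
    rw [hg]
    simp only []
    rw [hJAeq, hJBeq] at *
    simp only [he] at hgU hgI ⊢
    linarith
  · -- restriction to M ∪ X
    intro A hA
    have hAY : A ∩ Y = ∅ := by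
      rw [← subset_empty]
      intro z hz
      simp only [mem_inter] at hz
      rcases mem_union.1 (hA hz.1) with h | h
      · exact absurd hz.2 (disjoint_left.1 hMY h)
      · exact absurd hz.2 (disjoint_left.1 hXY h)
    have he_eq : ∀ J ∈ 𝒞, e A J = fX ((A ∩ X) ∪ J) := by
      intro J hJ
      have hJM := h𝒞M J hJ
      simp only [he, hAY, empty_union]
      rw [heY J hJM]
      ring
    have hAeq : (A ∩ X) ∪ (A ∩ M) = A := by
      rw [← inter_union_distrib_left, union_comm]
      exact inter_eq_left.2 hA
    apply le_antisymm
    · obtain ⟨J, hJ𝒞, hSJ, hJf⟩ := hcl (A ∩ M) inter_subset_right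
      have hJM := h𝒞M J hJ𝒞
      have hmem : J ∈ filter (fun J => A ∩ M ⊆ J) 𝒞 := mem_filter.2 ⟨hJ𝒞, hSJ⟩
      show (filter (fun J => A ∩ M ⊆ J) 𝒞).inf' _ (e A) ≤ fX A
      refine le_trans (inf'_le _ hmem) ?_
      rw [he_eq J hJ𝒞]
      have hxJ : (A ∩ X) ∪ J = A ∪ J := by
        conv_rhs => rw [← hAeq]
        rw [union_assoc, union_eq_right.2 hSJ]
      rw [hxJ]
      have hd := dimin ⟨hX0, hXnn, hXmono, hXsub⟩ (S := A ∩ M) (A := A) (J := J)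
        inter_subset_left hA (hJM.trans subset_union_left)
      have h1 : fX ((A ∩ M) ∪ J) = f J := by
        rw [union_eq_right.2 hSJ, heX J hJM]
      have h2 : fX (A ∩ M) = f (A ∩ M) := heX _ inter_subset_right
      rw [h1, h2, hJf] at hd
      linarith
    · refine le_inf' _ _ fun J hJ => ?_
      obtain ⟨hJ𝒞, hAJ⟩ := mem_filter.1 hJ
      rw [he_eq J hJ𝒞]
      refine hXmono _ _ ?_ (hXJ A J (h𝒞M J hJ𝒞))
      conv_lhs => rw [← hAeq]
      exact union_subset_union_right hAJ
  · -- restriction to M ∪ Y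
    intro A hA
    have hAX : A ∩ X = ∅ := by
      rw [← subset_empty]
      intro z hz
      simp only [mem_inter] at hz
      rcases mem_union.1 (hA hz.1) with h | h
      · exact absurd hz.2 (disjoint_left.1 hMX h)
      · exact absurd hz.2 (disjoint_left.1 (hXY.symm) h)
    have he_eq : ∀ J ∈ 𝒞, e A J = fY ((A ∩ Y) ∪ J) := by
      intro J hJ
      have hJM := h𝒞M J hJ
      simp only [he, hAX, empty_union]
      rw [heX J hJM]
      ring
    have hAeq : (A ∩ Y) ∪ (A ∩ M) = A := by
      rw [← inter_union_distrib_left, union_comm]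
      exact inter_eq_left.2 hA
    apply le_antisymm
    · obtain ⟨J, hJ𝒞, hSJ, hJf⟩ := hcl (A ∩ M) inter_subset_right
      have hJM := h𝒞M J hJ𝒞
      have hmem : J ∈ filter (fun J => A ∩ M ⊆ J) 𝒞 := mem_filter.2 ⟨hJ𝒞, hSJ⟩
      show (filter (fun J => A ∩ M ⊆ J) 𝒞).inf' _ (e A) ≤ fY A
      refine le_trans (inf'_le _ hmem) ?_
      rw [he_eq J hJ𝒞]
      have hxJ : (A ∩ Y) ∪ J = A ∪ J := by
        conv_rhs => rw [← hAeq]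
        rw [union_assoc, union_eq_right.2 hSJ]
      rw [hxJ]
      have hd := dimin ⟨hY0, hYnn, hYmono, hYsub⟩ (S := A ∩ M) (A := A) (J := J)
        inter_subset_left hA (hJM.trans subset_union_left)
      have h1 : fY ((A ∩ M) ∪ J) = f J := by
        rw [union_eq_right.2 hSJ, heY J hJM]
      have h2 : fY (A ∩ M) = f (A ∩ M) := heY _ inter_subset_right
      rw [h1, h2, hJf] at hd
      linarith
    · refine le_inf' _ _ fun J hJ => ?_
      obtain ⟨hJ𝒞, hAJ⟩ := mem_filter.1 hJ
      rw [he_eq J hJ𝒞]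
      refine hYmono _ _ ?_ (hYJ A J (h𝒞M J hJ𝒞))
      conv_lhs => rw [← hAeq]
      exact union_subset_union_right hAJ

lemma subset_pair' {a b : α} {s : Finset α} (h : s ⊆ {a, b}) :
    s = ∅ ∨ s = {a} ∨ s = {b} ∨ s = {a, b} := by
  by_cases ha : a ∈ s <;> by_cases hb : b ∈ s
  · right; right; right
    apply Subset.antisymm h
    intro z hz
    rcases mem_insert.1 hz with rfl | hz
    · exact ha
    · rw [mem_singleton] at hz; subst hz; exact hb
  · right; left
    apply Subset.antisymm _ (singleton_subset_iff.2 ha)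
    intro z hz
    rcases mem_insert.1 (h hz) with rfl | h'
    · exact mem_singleton_self _
    · rw [mem_singleton] at h'; subst h'; exact absurd hz hb
  · right; right; left
    apply Subset.antisymm _ (singleton_subset_iff.2 hb)
    intro z hz
    rcases mem_insert.1 (h hz) with rfl | h'
    · exact absurd hz ha
    · exact h'
  · left
    rw [eq_empty_iff_forall_notMem]
    intro z hz
    rcases mem_insert.1 (h hz) with rfl | h'
    · exact ha hz
    · rw [mem_singleton] at h'; subst h'; exact hb hz

def chi (e : α) : Finset α → ℝ := fun S => if e ∈ S then 1 else 0

def uind (T : Finset α) : Finset α → ℝ := fun S => if (S ∩ T).Nonempty then 1 else 0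

def vam : Bool → Bool → Bool → Bool → ℕ := fun pa pb pc pd =>
  let n : ℕ := (cond pa 1 0) + (cond pb 1 0) + (cond pc 1 0) + (cond pd 1 0)
  if n = 0 then 0 else if n = 1 then 2 else if n = 2 then (if pa || pb then 3 else 4) else 4

def vamf (a b c d : α) : Finset α → ℝ := fun S =>
  (vam (decide (a ∈ S)) (decide (b ∈ S)) (decide (c ∈ S)) (decide (d ∈ S)) : ℝ)

lemma chi_poly (G : Finset α) (e : α) : IsPolymatroid G (chi e) := by
  refine ⟨by simp [chi], fun A _ => by unfold chi; split <;> norm_num,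
    fun A B hAB _ => ?_, fun A B _ _ => ?_⟩
  · by_cases h : e ∈ A
    · simp [chi, h, hAB h]
    · simp only [chi, h, if_false]; split <;> norm_num
  · by_cases hA : e ∈ A <;> by_cases hB : e ∈ B <;>
      simp [chi, hA, hB, mem_union, mem_inter]

lemma uind_poly (G : Finset α) (T : Finset α) : IsPolymatroid G (uind T) := by
  refine ⟨by simp [uind], fun A _ => by unfold uind; split <;> norm_num,
    fun A B hAB _ => ?_, fun A B _ _ => ?_⟩
  · by_cases h : (A ∩ T).Nonempty
    · have hB : (B ∩ T).Nonempty := h.mono (inter_subset_inter hAB Subset.rfl)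
      simp [uind, h, hB]
    · simp only [uind, h, if_false]; split <;> norm_num
  · have hUin : ((A ∪ B) ∩ T) = (A ∩ T) ∪ (B ∩ T) := union_inter_distrib_right ..
    have hIsub : (A ∩ B ∩ T) ⊆ A ∩ T := inter_subset_inter inter_subset_left Subset.rfl
    have hIsub' : (A ∩ B ∩ T) ⊆ B ∩ T := inter_subset_inter inter_subset_right Subset.rfl
    by_cases hA : (A ∩ T).Nonempty <;> by_cases hB : (B ∩ T).Nonempty
    · have h1 : ((A ∪ B) ∩ T).Nonempty := by rw [hUin]; exact hA.inl
      simp only [uind, h1, hA, hB, if_true]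
      split <;> norm_num
    · have h1 : ((A ∪ B) ∩ T).Nonempty := by rw [hUin]; exact hA.inl
      have h2 : ¬ (A ∩ B ∩ T).Nonempty := fun h => hB (h.mono hIsub')
      rw [inter_assoc] at h2
      simp [uind, h1, hA, hB, h2]
    · have h1 : ((A ∪ B) ∩ T).Nonempty := by rw [hUin]; exact hB.inr
      have h2 : ¬ (A ∩ B ∩ T).Nonempty := fun h => hA (h.mono hIsub)
      rw [inter_assoc] at h2
      simp [uind, h1, hA, hB, h2]
    · have h1 : ¬ ((A ∪ B) ∩ T).Nonempty := by
        rw [hUin]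
        rintro ⟨z, hz⟩
        rcases mem_union.1 hz with h | h
        · exact hA ⟨z, h⟩
        · exact hB ⟨z, h⟩
      have h2 : ¬ (A ∩ B ∩ T).Nonempty := fun h => hA (h.mono hIsub)
      rw [inter_assoc] at h2
      simp [uind, h1, hA, hB, h2]

lemma vam_mono : ∀ a1 a2 a3 a4 b1 b2 b3 b4 : Bool, a1 ≤ b1 → a2 ≤ b2 → a3 ≤ b3 → a4 ≤ b4 →
    vam a1 a2 a3 a4 ≤ vam b1 b2 b3 b4 := by decide

lemma vam_sub : ∀ a1 a2 a3 a4 b1 b2 b3 b4 : Bool,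
    vam (a1 || b1) (a2 || b2) (a3 || b3) (a4 || b4) +
    vam (a1 && b1) (a2 && b2) (a3 && b3) (a4 && b4) ≤
    vam a1 a2 a3 a4 + vam b1 b2 b3 b4 := by decide

lemma decide_mem_union (e : α) (A B : Finset α) :
    decide (e ∈ A ∪ B) = (decide (e ∈ A) || decide (e ∈ B)) := by
  by_cases h1 : e ∈ A <;> by_cases h2 : e ∈ B <;> simp [h1, h2]

lemma decide_mem_inter (e : α) (A B : Finset α) :
    decide (e ∈ A ∩ B) = (decide (e ∈ A) && decide (e ∈ B)) := by
  by_cases h1 : e ∈ A <;> by_cases h2 : e ∈ B <;> simp [h1, h2]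

lemma decide_mem_mono {e : α} {A B : Finset α} (h : A ⊆ B) :
    decide (e ∈ A) ≤ decide (e ∈ B) := by
  by_cases h1 : e ∈ A
  · simp [h1, h h1]
  · simp [h1]

lemma vamf_poly (G : Finset α) (a b c d : α) : IsPolymatroid G (vamf a b c d) := by
  refine ⟨by simp [vamf, vam], fun A _ => Nat.cast_nonneg _,
    fun A B hAB _ => ?_, fun A B _ _ => ?_⟩
  · unfold vamf
    exact_mod_cast vam_mono _ _ _ _ _ _ _ _ (decide_mem_mono hAB) (decide_mem_mono hAB)
      (decide_mem_mono hAB) (decide_mem_mono hAB)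
  · unfold vamf
    rw [decide_mem_union, decide_mem_union, decide_mem_union, decide_mem_union,
      decide_mem_inter, decide_mem_inter, decide_mem_inter, decide_mem_inter]
    exact_mod_cast vam_sub (decide (a ∈ A)) (decide (b ∈ A)) (decide (c ∈ A)) (decide (d ∈ A))
      (decide (a ∈ B)) (decide (b ∈ B)) (decide (c ∈ B)) (decide (d ∈ B))

lemma combo4 (G : Finset α) (c1 c2 c3 c4 : ℝ) (h1 : 0 ≤ c1) (h2 : 0 ≤ c2) (h3 : 0 ≤ c3)
    (h4 : 0 ≤ c4) (f1 f2 f3 f4 : Finset α → ℝ)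
    (p1 : IsPolymatroid G f1) (p2 : IsPolymatroid G f2) (p3 : IsPolymatroid G f3)
    (p4 : IsPolymatroid G f4) :
    IsPolymatroid G (fun S => c1 * f1 S + c2 * f2 S + c3 * f3 S + c4 * f4 S) := by
  obtain ⟨a1, b1, m1, s1⟩ := p1
  obtain ⟨a2, b2, m2, s2⟩ := p2
  obtain ⟨a3, b3, m3, s3⟩ := p3
  obtain ⟨a4, b4, m4, s4⟩ := p4
  refine ⟨by simp only []; rw [a1, a2, a3, a4]; ring, fun A hA => ?_, fun A B hAB hB => ?_,
    fun A B hA hB => ?_⟩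
  · have := mul_nonneg h1 (b1 A hA); have := mul_nonneg h2 (b2 A hA)
    have := mul_nonneg h3 (b3 A hA); have := mul_nonneg h4 (b4 A hA)
    simp only []
    linarith
  · have := mul_le_mul_of_nonneg_left (m1 A B hAB hB) h1
    have := mul_le_mul_of_nonneg_left (m2 A B hAB hB) h2
    have := mul_le_mul_of_nonneg_left (m3 A B hAB hB) h3
    have := mul_le_mul_of_nonneg_left (m4 A B hAB hB) h4
    simp only []
    linarith
  · have := mul_le_mul_of_nonneg_left (s1 A B hA hB) h1
    have := mul_le_mul_of_nonneg_left (s2 A B hA hB) h2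
    have := mul_le_mul_of_nonneg_left (s3 A B hA hB) h3
    have := mul_le_mul_of_nonneg_left (s4 A B hA hB) h4
    simp only []
    linarith

lemma backward (a b : α) (hab : a ≠ b) (f : Finset α → ℝ)
    (hcond : f {a} + f {b} - f {a, b} = 0 ∨ f {a, b} = f {b} ∨ f {a, b} = f {a})
    (X Y : Finset α) (hMX : Disjoint ({a, b} : Finset α) X)
    (hMY : Disjoint ({a, b} : Finset α) Y) (hXY : Disjoint X Y)
    (fX fY : Finset α → ℝ)
    (hpX : IsPolymatroid ({a, b} ∪ X) fX) (hpY : IsPolymatroid ({a, b} ∪ Y) fY)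
    (heX : ∀ A ⊆ ({a, b} : Finset α), fX A = f A)
    (heY : ∀ A ⊆ ({a, b} : Finset α), fY A = f A) :
    ∃ g : Finset α → ℝ, IsPolymatroid ({a, b} ∪ X ∪ Y) g ∧
      (∀ A, A ⊆ {a, b} ∪ X → g A = fX A) ∧ (∀ A, A ⊆ {a, b} ∪ Y → g A = fY A) := by
  have hf0 : f ∅ = 0 := by rw [← heX ∅ (empty_subset _), hpX.1]
  have hsa : ({a} : Finset α) ⊆ {a, b} := by simp
  have hsb : ({b} : Finset α) ⊆ {a, b} := by simp
  have hu_ab : ({a} : Finset α) ∪ {b} = {a, b} := (insert_eq a {b}).symm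
  have hu_ba : ({b} : Finset α) ∪ {a} = {a, b} := by
    rw [← insert_eq]; exact pair_comm b a
  have hi_ab : ({a} : Finset α) ∩ {b} = ∅ := by
    rw [singleton_inter_of_notMem]; simp [hab]
  have hi_ba : ({b} : Finset α) ∩ {a} = ∅ := by
    rw [singleton_inter_of_notMem]; simp [hab.symm]
  have hu1 : ({a} : Finset α) ∪ {a, b} = {a, b} := union_eq_right.2 hsa
  have hu2 : ({a, b} : Finset α) ∪ {a} = {a, b} := union_eq_left.2 hsa
  have hi1 : ({a} : Finset α) ∩ {a, b} = {a} := inter_eq_left.2 hsa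
  have hi2 : ({a, b} : Finset α) ∩ {a} = {a} := inter_eq_right.2 hsa
  have hu3 : ({b} : Finset α) ∪ {a, b} = {a, b} := union_eq_right.2 hsb
  have hu4 : ({a, b} : Finset α) ∪ {b} = {a, b} := union_eq_left.2 hsb
  have hi3 : ({b} : Finset α) ∩ {a, b} = {b} := inter_eq_left.2 hsb
  have hi4 : ({a, b} : Finset α) ∩ {b} = {b} := inter_eq_right.2 hsb
  rcases hcond with hm | ha | hb
  · refine amalgam_of_lattice {a, b} X Y f fX fY hMY hXY hMX hpX hpY heX heY
      (powerset {a, b}) (mem_powerset.2 Subset.rfl) (fun J hJ => mem_powerset.1 hJ)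
      ?_ (fun S hS => ⟨S, mem_powerset.2 hS, Subset.rfl, rfl⟩)
    intro J1 h1 J2 h2
    rw [mem_powerset] at h1 h2
    refine ⟨mem_powerset.2 (union_subset h1 h2), mem_powerset.2 (inter_subset_left.trans h1), ?_⟩
    rcases subset_pair' h1 with rfl | rfl | rfl | rfl <;>
      rcases subset_pair' h2 with rfl | rfl | rfl | rfl <;>
      simp only [union_self, inter_self, union_empty, empty_union, inter_empty, empty_inter,
        hu_ab, hu_ba, hi_ab, hi_ba, hu1, hu2, hi1, hi2, hu3, hu4, hi3, hi4] <;>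
      linarith
  · refine amalgam_of_lattice {a, b} X Y f fX fY hMY hXY hMX hpX hpY heX heY
      {∅, {a}, {a, b}} (by simp) ?_ ?_ ?_
    · intro J hJ
      simp only [mem_insert, mem_singleton] at hJ
      rcases hJ with rfl | rfl | rfl
      · exact empty_subset _
      · exact hsa
      · exact Subset.rfl
    · intro J1 h1 J2 h2
      simp only [mem_insert, mem_singleton] at h1 h2
      rcases h1 with rfl | rfl | rfl <;> rcases h2 with rfl | rfl | rfl <;>
        refine ⟨by simp [union_self, union_empty, empty_union, hu1, hu2],
          by simp [inter_self, inter_empty, empty_inter, hi1, hi2], by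
          simp only [union_self, inter_self, union_empty, empty_union, inter_empty, empty_inter,
            hu1, hu2, hi1, hi2]
          try linarith⟩
    · intro S hS
      rcases subset_pair' hS with rfl | rfl | rfl | rfl
      · exact ⟨∅, by simp, Subset.rfl, rfl⟩
      · exact ⟨{a}, by simp, Subset.rfl, rfl⟩
      · exact ⟨{a, b}, by simp, hsb, ha⟩
      · exact ⟨{a, b}, by simp, Subset.rfl, rfl⟩
  · refine amalgam_of_lattice {a, b} X Y f fX fY hMY hXY hMX hpX hpY heX heY
      {∅, {b}, {a, b}} (by simp) ?_ ?_ ?_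
    · intro J hJ
      simp only [mem_insert, mem_singleton] at hJ
      rcases hJ with rfl | rfl | rfl
      · exact empty_subset _
      · exact hsb
      · exact Subset.rfl
    · intro J1 h1 J2 h2
      simp only [mem_insert, mem_singleton] at h1 h2
      rcases h1 with rfl | rfl | rfl <;> rcases h2 with rfl | rfl | rfl <;>
        refine ⟨by simp [union_self, union_empty, empty_union, hu3, hu4],
          by simp [inter_self, inter_empty, empty_inter, hi3, hi4], by
          simp only [union_self, inter_self, union_empty, empty_union, inter_empty, empty_inter,
            hu3, hu4, hi3, hi4]
          try linarith⟩
    · intro S hS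
      rcases subset_pair' hS with rfl | rfl | rfl | rfl
      · exact ⟨∅, by simp, Subset.rfl, rfl⟩
      · exact ⟨{a, b}, by simp, hsa, hb⟩
      · exact ⟨{b}, by simp, Subset.rfl, rfl⟩
      · exact ⟨{a, b}, by simp, Subset.rfl, rfl⟩

lemma forward_false (hα : Infinite α) (a b : α) (hab : a ≠ b)
    (f : Finset α → ℝ) (hf : IsPolymatroid {a, b} f)
    (hm : 0 < f {a} + f {b} - f {a, b})
    (hal : 0 < f {a, b} - f {b})
    (hbe : 0 < f {a, b} - f {a})
    (H : ∀ X Y : Finset α, X.card ≤ 2 → Y.card ≤ 2 →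
       Disjoint ({a, b} : Finset α) X → Disjoint ({a, b} : Finset α) Y →
       Disjoint X Y →
       ∀ fX fY : Finset α → ℝ,
         IsPolymatroid ({a, b} ∪ X) fX → IsPolymatroid ({a, b} ∪ Y) fY →
         (∀ A ⊆ ({a, b} : Finset α), fX A = f A) →
         (∀ A ⊆ ({a, b} : Finset α), fY A = f A) →
         ∃ g : Finset α → ℝ, IsPolymatroid ({a, b} ∪ X ∪ Y) g ∧
           (∀ A, A ⊆ {a, b} ∪ X → g A = fX A) ∧ (∀ A, A ⊆ {a, b} ∪ Y → g A = fY A)) :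
    False := by
  haveI := hα
  obtain ⟨x, hx⟩ := Infinite.exists_notMem_finset ({a, b} : Finset α)
  simp only [mem_insert, mem_singleton, not_or] at hx
  obtain ⟨hxa, hxb⟩ := hx
  obtain ⟨y1, hy1⟩ := Infinite.exists_notMem_finset ({a, b, x} : Finset α)
  simp only [mem_insert, mem_singleton, not_or] at hy1
  obtain ⟨h1a, h1b, h1x⟩ := hy1
  obtain ⟨y2, hy2⟩ := Infinite.exists_notMem_finset ({a, b, x, y1} : Finset α)
  simp only [mem_insert, mem_singleton, not_or] at hy2
  obtain ⟨h2a, h2b, h2x, h21⟩ := hy2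
  set m : ℝ := f {a} + f {b} - f {a, b} with hm_def
  set al : ℝ := f {a, b} - f {b} with hal_def
  set be : ℝ := f {a, b} - f {a} with hbe_def
  set t : ℝ := min m (min al be) with ht_def
  have ht : 0 < t := lt_min hm (lt_min hal hbe)
  have htm : t ≤ m := min_le_left _ _
  have hta : t ≤ al := le_trans (min_le_right _ _) (min_le_left _ _)
  have htb : t ≤ be := le_trans (min_le_right _ _) (min_le_right _ _)
  set fX : Finset α → ℝ :=
    fun S => m * uind {a, b, x} S + al * chi a S + be * chi b S + 0 * chi a S with hfX_def
  set fY : Finset α → ℝ := fun S => t * vamf a b y1 y2 S + (m - t) * uind {a, b, y1, y2} S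
    + (al - t) * chi a S + (be - t) * chi b S with hfY_def
  have hpX : IsPolymatroid ({a, b} ∪ {x}) fX :=
    combo4 _ m al be 0 hm.le hal.le hbe.le le_rfl _ _ _ _
      (uind_poly _ _) (chi_poly _ _) (chi_poly _ _) (chi_poly _ a)
  have hpY : IsPolymatroid ({a, b} ∪ {y1, y2}) fY :=
    combo4 _ t (m - t) (al - t) (be - t) ht.le (by linarith) (by linarith) (by linarith)
      _ _ _ _ (vamf_poly _ _ _ _ _) (uind_poly _ _) (chi_poly _ _) (chi_poly _ _)
  have hf0 : f ∅ = 0 := hf.1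
  -- extension properties
  have heX : ∀ A ⊆ ({a, b} : Finset α), fX A = f A := by
    intro A hA
    rcases subset_pair' hA with rfl | rfl | rfl | rfl <;>
      simp only [hfX_def, uind, chi] <;>
      · norm_num [hab, hab.symm, hxa, hxb, Ne.symm hxa, Ne.symm hxb,
          singleton_inter_of_mem, insert_inter_of_mem, mem_insert, mem_singleton]
        try linarith
  have heY : ∀ A ⊆ ({a, b} : Finset α), fY A = f A := by
    intro A hA
    rcases subset_pair' hA with rfl | rfl | rfl | rfl <;>
      simp only [hfY_def, uind, chi, vamf] <;>
      · norm_num [vam, hab, hab.symm, h1a, h1b, h2a, h2b, Ne.symm h1a, Ne.symm h1b,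
          Ne.symm h2a, Ne.symm h2b, singleton_inter_of_mem, insert_inter_of_mem,
          mem_insert, mem_singleton, notMem_empty]
        try linarith
  have hGX : ({a, b} : Finset α) ∪ {x} = {a, b, x} := by
    ext z; simp only [mem_union, mem_insert, mem_singleton]; tauto
  have hGY : ({a, b} : Finset α) ∪ {y1, y2} = {a, b, y1, y2} := by
    ext z; simp only [mem_union, mem_insert, mem_singleton]; tauto
  have hGeq : ({a, b} : Finset α) ∪ {x} ∪ {y1, y2} = {a, b, x, y1, y2} := by
    ext z; simp only [mem_union, mem_insert, mem_singleton]; tauto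
  obtain ⟨g, ⟨g0, gnn, gmono, gsub⟩, hgX, hgY⟩ :=
    H {x} {y1, y2} (by simp) (by rw [card_insert_of_notMem (by simp [Ne.symm h21])]; simp)
      (by rw [disjoint_singleton_right]
          simp only [mem_insert, mem_singleton, not_or]
          exact ⟨hxa, hxb⟩)
      (by rw [disjoint_left]; intro z hz hz'
          simp only [mem_insert, mem_singleton] at hz hz'
          rcases hz with rfl | rfl <;> rcases hz' with rfl | rfl <;> tauto)
      (by rw [disjoint_left]; intro z hz hz'
          simp only [mem_insert, mem_singleton] at hz hz'
          subst hz
          rcases hz' with rfl | rfl <;> tauto)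
      fX fY hpX hpY heX heY
  -- values from the X side
  have gx : g {x} = m := by
    rw [hgX {x} (by rw [hGX]; simp [insert_subset_iff])]
    simp only [hfX_def, uind, chi]
    norm_num [hxa, hxb, Ne.symm hxa, Ne.symm hxb, singleton_inter_of_mem,
      insert_inter_of_mem, mem_insert, mem_singleton]
  have ga : g {a} = m + al := by
    rw [hgX {a} (by rw [hGX]; simp [insert_subset_iff])]
    simp only [hfX_def, uind, chi]
    norm_num [hab, hab.symm, singleton_inter_of_mem, mem_insert, mem_singleton]
  have gb : g {b} = m + be := by
    rw [hgX {b} (by rw [hGX]; simp [insert_subset_iff])]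
    simp only [hfX_def, uind, chi]
    norm_num [hab, hab.symm, singleton_inter_of_mem, mem_insert, mem_singleton]
  have gax : g {a, x} = m + al := by
    rw [hgX {a, x} (by rw [hGX]; simp [insert_subset_iff])]
    simp only [hfX_def, uind, chi]
    norm_num [hab, hab.symm, hxa, hxb, Ne.symm hxa, Ne.symm hxb,
      insert_inter_of_mem, mem_insert, mem_singleton]
  have gbx : g {b, x} = m + be := by
    rw [hgX {b, x} (by rw [hGX]; simp [insert_subset_iff])]
    simp only [hfX_def, uind, chi]
    norm_num [hab, hab.symm, hxa, hxb, Ne.symm hxa, Ne.symm hxb,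
      insert_inter_of_mem, mem_insert, mem_singleton]
  -- values from the Y side
  have gay1 : g {a, y1} = m + al + t := by
    rw [hgY {a, y1} (by rw [hGY]; simp [insert_subset_iff])]
    simp only [hfY_def, uind, chi, vamf]
    norm_num [vam, hab, hab.symm, h1a, h1b, h2a, h2b, h21, Ne.symm h1a, Ne.symm h1b,
      Ne.symm h2a, Ne.symm h2b, Ne.symm h21, insert_inter_of_mem, mem_insert, mem_singleton]
    try linarith
  have gby1 : g {b, y1} = m + be + t := by
    rw [hgY {b, y1} (by rw [hGY]; simp [insert_subset_iff])]
    simp only [hfY_def, uind, chi, vamf]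
    norm_num [vam, hab, hab.symm, h1a, h1b, h2a, h2b, h21, Ne.symm h1a, Ne.symm h1b,
      Ne.symm h2a, Ne.symm h2b, Ne.symm h21, insert_inter_of_mem, mem_insert, mem_singleton]
    try linarith
  have gaby1 : g {a, b, y1} = m + al + be + t := by
    rw [hgY {a, b, y1} (by rw [hGY]; simp [insert_subset_iff])]
    simp only [hfY_def, uind, chi, vamf]
    norm_num [vam, hab, hab.symm, h1a, h1b, h2a, h2b, h21, Ne.symm h1a, Ne.symm h1b,
      Ne.symm h2a, Ne.symm h2b, Ne.symm h21, insert_inter_of_mem, mem_insert, mem_singleton]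
    try linarith
  have gay2 : g {a, y2} = m + al + t := by
    rw [hgY {a, y2} (by rw [hGY]; simp [insert_subset_iff])]
    simp only [hfY_def, uind, chi, vamf]
    norm_num [vam, hab, hab.symm, h1a, h1b, h2a, h2b, h21, Ne.symm h1a, Ne.symm h1b,
      Ne.symm h2a, Ne.symm h2b, Ne.symm h21, insert_inter_of_mem, mem_insert, mem_singleton]
    try linarith
  have gby2 : g {b, y2} = m + be + t := by
    rw [hgY {b, y2} (by rw [hGY]; simp [insert_subset_iff])]
    simp only [hfY_def, uind, chi, vamf]
    norm_num [vam, hab, hab.symm, h1a, h1b, h2a, h2b, h21, Ne.symm h1a, Ne.symm h1b,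
      Ne.symm h2a, Ne.symm h2b, Ne.symm h21, insert_inter_of_mem, mem_insert, mem_singleton]
    try linarith
  have gaby2 : g {a, b, y2} = m + al + be + t := by
    rw [hgY {a, b, y2} (by rw [hGY]; simp [insert_subset_iff])]
    simp only [hfY_def, uind, chi, vamf]
    norm_num [vam, hab, hab.symm, h1a, h1b, h2a, h2b, h21, Ne.symm h1a, Ne.symm h1b,
      Ne.symm h2a, Ne.symm h2b, Ne.symm h21, insert_inter_of_mem, mem_insert, mem_singleton]
    try linarith
  have gy12 : g {y1, y2} = m + 3 * t := by
    rw [hgY {y1, y2} (by rw [hGY]; simp [insert_subset_iff])]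
    simp only [hfY_def, uind, chi, vamf]
    norm_num [vam, hab, hab.symm, h1a, h1b, h2a, h2b, h21, Ne.symm h1a, Ne.symm h1b,
      Ne.symm h2a, Ne.symm h2b, Ne.symm h21, insert_inter_of_mem, mem_insert, mem_singleton]
    try linarith
  -- set identities
  have E1 : ({a, y1} : Finset α) ∪ {a, x} = {a, x, y1} := by
    ext z
    simp only [mem_union, mem_insert, mem_singleton]
    constructor
    · rintro ((rfl | rfl) | (rfl | rfl))
      · exact Or.inl rfl
      · exact Or.inr (Or.inr rfl)
      · exact Or.inl rfl
      · exact Or.inr (Or.inl rfl)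
    · rintro (rfl | rfl | rfl)
      · exact Or.inl (Or.inl rfl)
      · exact Or.inr (Or.inr rfl)
      · exact Or.inl (Or.inr rfl)
  have E2 : ({a, y1} : Finset α) ∩ {a, x} = {a} := by
    ext z
    simp only [mem_inter, mem_insert, mem_singleton]
    constructor
    · rintro ⟨rfl | rfl, h2 | h2⟩ <;> first | rfl | exact h2 | exact absurd h2 h1x
    · rintro rfl; exact ⟨Or.inl rfl, Or.inl rfl⟩
  have E3 : ({b, y1} : Finset α) ∪ {b, x} = {b, x, y1} := by
    ext z
    simp only [mem_union, mem_insert, mem_singleton]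
    constructor
    · rintro ((rfl | rfl) | (rfl | rfl))
      · exact Or.inl rfl
      · exact Or.inr (Or.inr rfl)
      · exact Or.inl rfl
      · exact Or.inr (Or.inl rfl)
    · rintro (rfl | rfl | rfl)
      · exact Or.inl (Or.inl rfl)
      · exact Or.inr (Or.inr rfl)
      · exact Or.inl (Or.inr rfl)
  have E4 : ({b, y1} : Finset α) ∩ {b, x} = {b} := by
    ext z
    simp only [mem_inter, mem_insert, mem_singleton]
    constructor
    · rintro ⟨rfl | rfl, h2 | h2⟩ <;> first | rfl | exact h2 | exact absurd h2 h1x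
    · rintro rfl; exact ⟨Or.inl rfl, Or.inl rfl⟩
  have E5 : ({a, x, y1} : Finset α) ∪ {b, x, y1} = {a, b, x, y1} := by
    ext z
    simp only [mem_union, mem_insert, mem_singleton]
    constructor
    · rintro ((rfl | rfl | rfl) | (rfl | rfl | rfl))
      · exact Or.inl rfl
      · exact Or.inr (Or.inr (Or.inl rfl))
      · exact Or.inr (Or.inr (Or.inr rfl))
      · exact Or.inr (Or.inl rfl)
      · exact Or.inr (Or.inr (Or.inl rfl))
      · exact Or.inr (Or.inr (Or.inr rfl))
    · rintro (rfl | rfl | rfl | rfl)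
      · exact Or.inl (Or.inl rfl)
      · exact Or.inr (Or.inl rfl)
      · exact Or.inl (Or.inr (Or.inl rfl))
      · exact Or.inl (Or.inr (Or.inr rfl))
  have E6 : ({a, x, y1} : Finset α) ∩ {b, x, y1} = {x, y1} := by
    ext z
    rw [mem_inter]
    simp only [mem_insert, mem_singleton]
    constructor
    · rintro ⟨hz1, hz2⟩
      rcases hz1 with rfl | rfl | rfl
      · rcases hz2 with h | h | h
        · exact absurd h hab
        · exact absurd h (Ne.symm hxa)
        · exact absurd h (Ne.symm h1a)
      · exact Or.inl rfl
      · exact Or.inr rfl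
    · rintro (rfl | rfl)
      · exact ⟨Or.inr (Or.inl rfl), Or.inr (Or.inl rfl)⟩
      · exact ⟨Or.inr (Or.inr rfl), Or.inr (Or.inr rfl)⟩
  have E1' : ({a, y2} : Finset α) ∪ {a, x} = {a, x, y2} := by
    ext z
    simp only [mem_union, mem_insert, mem_singleton]
    constructor
    · rintro ((rfl | rfl) | (rfl | rfl))
      · exact Or.inl rfl
      · exact Or.inr (Or.inr rfl)
      · exact Or.inl rfl
      · exact Or.inr (Or.inl rfl)
    · rintro (rfl | rfl | rfl)
      · exact Or.inl (Or.inl rfl)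
      · exact Or.inr (Or.inr rfl)
      · exact Or.inl (Or.inr rfl)
  have E2' : ({a, y2} : Finset α) ∩ {a, x} = {a} := by
    ext z
    simp only [mem_inter, mem_insert, mem_singleton]
    constructor
    · rintro ⟨rfl | rfl, h2 | h2⟩ <;> first | rfl | exact h2 | exact absurd h2 h2x
    · rintro rfl; exact ⟨Or.inl rfl, Or.inl rfl⟩
  have E3' : ({b, y2} : Finset α) ∪ {b, x} = {b, x, y2} := by
    ext z
    simp only [mem_union, mem_insert, mem_singleton]
    constructor
    · rintro ((rfl | rfl) | (rfl | rfl))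
      · exact Or.inl rfl
      · exact Or.inr (Or.inr rfl)
      · exact Or.inl rfl
      · exact Or.inr (Or.inl rfl)
    · rintro (rfl | rfl | rfl)
      · exact Or.inl (Or.inl rfl)
      · exact Or.inr (Or.inr rfl)
      · exact Or.inl (Or.inr rfl)
  have E4' : ({b, y2} : Finset α) ∩ {b, x} = {b} := by
    ext z
    simp only [mem_inter, mem_insert, mem_singleton]
    constructor
    · rintro ⟨rfl | rfl, h2 | h2⟩ <;> first | rfl | exact h2 | exact absurd h2 h2x
    · rintro rfl; exact ⟨Or.inl rfl, Or.inl rfl⟩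
  have E5' : ({a, x, y2} : Finset α) ∪ {b, x, y2} = {a, b, x, y2} := by
    ext z
    simp only [mem_union, mem_insert, mem_singleton]
    constructor
    · rintro ((rfl | rfl | rfl) | (rfl | rfl | rfl))
      · exact Or.inl rfl
      · exact Or.inr (Or.inr (Or.inl rfl))
      · exact Or.inr (Or.inr (Or.inr rfl))
      · exact Or.inr (Or.inl rfl)
      · exact Or.inr (Or.inr (Or.inl rfl))
      · exact Or.inr (Or.inr (Or.inr rfl))
    · rintro (rfl | rfl | rfl | rfl)
      · exact Or.inl (Or.inl rfl)
      · exact Or.inr (Or.inl rfl)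
      · exact Or.inl (Or.inr (Or.inl rfl))
      · exact Or.inl (Or.inr (Or.inr rfl))
  have E6' : ({a, x, y2} : Finset α) ∩ {b, x, y2} = {x, y2} := by
    ext z
    rw [mem_inter]
    simp only [mem_insert, mem_singleton]
    constructor
    · rintro ⟨hz1, hz2⟩
      rcases hz1 with rfl | rfl | rfl
      · rcases hz2 with h | h | h
        · exact absurd h hab
        · exact absurd h (Ne.symm hxa)
        · exact absurd h (Ne.symm h2a)
      · exact Or.inl rfl
      · exact Or.inr rfl
    · rintro (rfl | rfl)
      · exact ⟨Or.inr (Or.inl rfl), Or.inr (Or.inl rfl)⟩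
      · exact ⟨Or.inr (Or.inr rfl), Or.inr (Or.inr rfl)⟩
  have E8 : ({x, y1} : Finset α) ∪ {x, y2} = {x, y1, y2} := by
    ext z
    simp only [mem_union, mem_insert, mem_singleton]
    constructor
    · rintro ((rfl | rfl) | (rfl | rfl))
      · exact Or.inl rfl
      · exact Or.inr (Or.inl rfl)
      · exact Or.inl rfl
      · exact Or.inr (Or.inr rfl)
    · rintro (rfl | rfl | rfl)
      · exact Or.inl (Or.inl rfl)
      · exact Or.inl (Or.inr rfl)
      · exact Or.inr (Or.inr rfl)
  have E9 : ({x, y1} : Finset α) ∩ {x, y2} = {x} := by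
    ext z
    simp only [mem_inter, mem_insert, mem_singleton]
    constructor
    · rintro ⟨rfl | rfl, h2 | h2⟩ <;> first | rfl | exact h2 | exact absurd h2 (Ne.symm h21)
    · rintro rfl; exact ⟨Or.inl rfl, Or.inl rfl⟩
  -- the contradiction chain
  have s1 := gsub {a, y1} {a, x}
    (by rw [hGeq]; simp [insert_subset_iff])
    (by rw [hGeq]; simp [insert_subset_iff])
  rw [E1, E2] at s1
  have s2 := gsub {b, y1} {b, x}
    (by rw [hGeq]; simp [insert_subset_iff])
    (by rw [hGeq]; simp [insert_subset_iff])
  rw [E3, E4] at s2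
  have s3 := gsub {a, x, y1} {b, x, y1}
    (by rw [hGeq]; simp [insert_subset_iff])
    (by rw [hGeq]; simp [insert_subset_iff])
  rw [E5, E6] at s3
  have m1 := gmono {a, b, y1} {a, b, x, y1}
    (by simp [insert_subset_iff])
    (by rw [hGeq]; simp [insert_subset_iff])
  have s1' := gsub {a, y2} {a, x}
    (by rw [hGeq]; simp [insert_subset_iff])
    (by rw [hGeq]; simp [insert_subset_iff])
  rw [E1', E2'] at s1'
  have s2' := gsub {b, y2} {b, x}
    (by rw [hGeq]; simp [insert_subset_iff])
    (by rw [hGeq]; simp [insert_subset_iff])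
  rw [E3', E4'] at s2'
  have s3' := gsub {a, x, y2} {b, x, y2}
    (by rw [hGeq]; simp [insert_subset_iff])
    (by rw [hGeq]; simp [insert_subset_iff])
  rw [E5', E6'] at s3'
  have m1' := gmono {a, b, y2} {a, b, x, y2}
    (by simp [insert_subset_iff])
    (by rw [hGeq]; simp [insert_subset_iff])
  have s5 := gsub {x, y1} {x, y2}
    (by rw [hGeq]; simp [insert_subset_iff])
    (by rw [hGeq]; simp [insert_subset_iff])
  rw [E8, E9] at s5
  have m2 := gmono {y1, y2} {x, y1, y2}
    (by simp [insert_subset_iff])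
    (by rw [hGeq]; simp [insert_subset_iff])
  linarith


/-- a polymatroid on the two-element ground set `{a,b}` is
2-sticky iff `f(a,b) = 0`, or `f(a|b) = 0`, or `f(b|a) = 0`. (The type `α` is
assumed infinite so that extension elements are available.) -/
theorem statement_17 (hα : Infinite α) (a b : α) (hab : a ≠ b)
    (f : Finset α → ℝ) (hf : IsPolymatroid {a, b} f) :
    (∀ X Y : Finset α, X.card ≤ 2 → Y.card ≤ 2 →
       Disjoint ({a, b} : Finset α) X → Disjoint ({a, b} : Finset α) Y →
       Disjoint X Y →
       ∀ fX fY : Finset α → ℝ,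
         IsPolymatroid ({a, b} ∪ X) fX → IsPolymatroid ({a, b} ∪ Y) fY →
         (∀ A ⊆ ({a, b} : Finset α), fX A = f A) →
         (∀ A ⊆ ({a, b} : Finset α), fY A = f A) →
         HaveAmalgam {a, b} X Y fX fY) ↔
      (pmi f {a} {b} ∅ = 0 ∨ pcd f {a} {b} = 0 ∨ pcd f {b} {a} = 0) := by
  have hsa : ({a} : Finset α) ⊆ {a, b} := by simp
  have hsb : ({b} : Finset α) ⊆ {a, b} := by simp
  have hu_ab : ({a} : Finset α) ∪ {b} = {a, b} := (insert_eq a {b}).symm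
  have hu_ba : ({b} : Finset α) ∪ {a} = {a, b} := by
    rw [← insert_eq]; exact pair_comm b a
  have hi_ab : ({a} : Finset α) ∩ {b} = ∅ := by
    rw [singleton_inter_of_notMem]; simp [hab]
  have hf0 : f ∅ = 0 := hf.1
  have hpmi : pmi f {a} {b} ∅ = f {a} + f {b} - f {a, b} := by
    rw [pmi, union_empty, union_empty, union_empty, hu_ab, hf0]
    ring
  have hpcd1 : pcd f {a} {b} = f {a, b} - f {b} := by rw [pcd, hu_ab]
  have hpcd2 : pcd f {b} {a} = f {a, b} - f {a} := by rw [pcd, hu_ba]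
  constructor
  · intro H
    by_contra hc
    push_neg at hc
    obtain ⟨h1, h2, h3⟩ := hc
    rw [hpmi] at h1
    rw [hpcd1] at h2
    rw [hpcd2] at h3
    have hmge : f {a, b} + f ∅ ≤ f {a} + f {b} := by
      have := hf.2.2.2 {a} {b} hsa hsb
      rwa [hu_ab, hi_ab] at this
    have hage : f {b} ≤ f {a, b} := hf.2.2.1 {b} {a, b} hsb Subset.rfl
    have hbge : f {a} ≤ f {a, b} := hf.2.2.1 {a} {a, b} hsa Subset.rfl
    refine forward_false hα a b hab f hf ?_ ?_ ?_ H
    · exact lt_of_le_of_ne (by linarith) (Ne.symm h1)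
    · exact lt_of_le_of_ne (by linarith) (fun h => h2 (by linarith))
    · exact lt_of_le_of_ne (by linarith) (fun h => h3 (by linarith))
  · intro hcond X Y _ _ hMX hMY hXY fX fY hpX hpY heX heY
    have hcond' : f {a} + f {b} - f {a, b} = 0 ∨ f {a, b} = f {b} ∨ f {a, b} = f {a} := by
      rcases hcond with h | h | h
      · left; rw [hpmi] at h; linarith
      · right; left; rw [hpcd1] at h; linarith
      · right; right; rw [hpcd2] at h; linarith
    exact backward a b hab f hcond' X Y hMX hMY hXY fX fY hpX hpY heX heY
end
end

section
/- Let f be a polymatroid on {a,b} with f(a,b) > 0, f(a|b) > 0, and f(b|a) > 0. Then there exists a polymatroid f_X on {a,b,x_1,x_2} extending f whose Ingleton expression satisfies f_X[a,b,x_1,x_2] < 0. -/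
open Finset

noncomputable section

variable {α : Type*} [DecidableEq α]

/-- The Ingleton expression `f[I,J,K,L] = −f(I,J)+f(I,J|K)+f(I,J|L)+f(K,L)`. -/
def ingleton (f : Finset α → ℝ) (I J K L : Finset α) : ℝ :=
  -pmi f I J ∅ + pmi f I J K + pmi f I J L + pmi f K L ∅

/-- The value of the extended polymatroid as a function of the four membership
bits (of `a`, `b`, `x1`, `x2`). -/
noncomputable def gfun (m al be t : ℝ) (pa pb px py : Bool) : ℝ :=
  (if pa || pb || px || py then m else 0) + (if pa then al else 0) +
    (if pb then be else 0) +
    ((if px then t else 0) + (if py then t else 0) +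
      (if px && py then t - (if pa then t else 0) - (if pb then t else 0) else 0))

lemma gfun_nonneg (m al be t : ℝ) (ht : 0 ≤ t) (htm : t ≤ m) (hta : t ≤ al)
    (htb : t ≤ be) (pa pb px py : Bool) : 0 ≤ gfun m al be t pa pb px py := by
  cases pa <;> cases pb <;> cases px <;> cases py <;> simp [gfun] <;> linarith

lemma gfun_mono (m al be t : ℝ) (ht : 0 ≤ t) (htm : t ≤ m) (hta : t ≤ al)
    (htb : t ≤ be) (pa pb px py qa qb qx qy : Bool) :
    gfun m al be t pa pb px py ≤
      gfun m al be t (pa || qa) (pb || qb) (px || qx) (py || qy) := by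
  cases pa <;> cases pb <;> cases px <;> cases py <;> cases qa <;> cases qb <;>
    cases qx <;> cases qy <;> simp [gfun] <;> linarith

lemma gfun_submod (m al be t : ℝ) (ht : 0 ≤ t) (htm : t ≤ m) (hta : t ≤ al)
    (htb : t ≤ be) (pa pb px py qa qb qx qy : Bool) :
    gfun m al be t (pa || qa) (pb || qb) (px || qx) (py || qy) +
      gfun m al be t (pa && qa) (pb && qb) (px && qx) (py && qy) ≤
    gfun m al be t pa pb px py + gfun m al be t qa qb qx qy := by
  cases pa <;> cases pb <;> cases px <;> cases py <;> cases qa <;> cases qb <;>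
    cases qx <;> cases qy <;> simp [gfun] <;> linarith

lemma decide_mem_of_subset {A B : Finset α} (h : A ⊆ B) (e : α) :
    decide (e ∈ B) = (decide (e ∈ A) || decide (e ∈ B)) := by
  by_cases h1 : e ∈ A
  · simp [h1, h h1]
  · simp [h1]

/-- a polymatroid `f` on `{a,b}` with `f(a,b) > 0`, `f(a|b) > 0`
and `f(b|a) > 0` has an extension `f_X` to `{a,b,x1,x2}` with
`f_X[a,b,x1,x2] < 0`. -/
theorem statement_18 (a b x1 x2 : α) (hnd : ([a, b, x1, x2] : List α).Nodup)
    (f : Finset α → ℝ) (hf : IsPolymatroid {a, b} f)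
    (h1 : 0 < pmi f {a} {b} ∅) (h2 : 0 < pcd f {a} {b}) (h3 : 0 < pcd f {b} {a}) :
    ∃ fX : Finset α → ℝ,
      IsPolymatroid {a, b, x1, x2} fX ∧
      (∀ A ⊆ ({a, b} : Finset α), fX A = f A) ∧
      ingleton fX {a} {b} {x1} {x2} < 0 := by
  -- distinctness
  simp only [List.nodup_cons, List.mem_cons, List.not_mem_nil, or_false,
    List.nodup_nil, and_true, not_or] at hnd
  obtain ⟨⟨hab, hax1, hax2⟩, ⟨hbx1, hbx2⟩, hx12, -⟩ := hnd
  obtain ⟨hf0, hfnn, hfmono, hfsub⟩ := hf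
  -- the parameters
  set m : ℝ := pmi f {a} {b} ∅ with hm
  set al : ℝ := pcd f {a} {b} with hal
  set be : ℝ := pcd f {b} {a} with hbe
  set t : ℝ := min m (min al be) with htdef
  have ht0 : 0 < t := lt_min h1 (lt_min h2 h3)
  have htm : t ≤ m := min_le_left _ _
  have hta : t ≤ al := le_trans (min_le_right _ _) (min_le_left _ _)
  have htb : t ≤ be := le_trans (min_le_right _ _) (min_le_right _ _)
  -- values of f
  have hu : ({a} : Finset α) ∪ {b} = {a, b} := by ext e; simp
  have hu2 : ({b} : Finset α) ∪ {a} = {a, b} := by ext e; simp [or_comm]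
  have e1 : m = f {a} + f {b} - f {a, b} := by
    rw [hm]; simp only [pmi, union_empty, hu]; rw [hf0]; ring
  have e2 : al = f {a, b} - f {b} := by rw [hal]; simp only [pcd, hu]
  have e3 : be = f {a, b} - f {a} := by rw [hbe]; simp only [pcd, hu2]
  have hfa : f {a} = m + al := by linarith
  have hfb : f {b} = m + be := by linarith
  have hfab : f {a, b} = m + al + be := by linarith
  have hba : b ≠ a := fun h => hab h.symm
  have h1' : x1 ≠ a := fun h => hax1 h.symm
  have h2' : x2 ≠ a := fun h => hax2 h.symm
  have h3' : x1 ≠ b := fun h => hbx1 h.symm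
  have h4' : x2 ≠ b := fun h => hbx2 h.symm
  have h5' : x2 ≠ x1 := fun h => hx12 h.symm
  -- the extension
  refine ⟨fun A => gfun m al be t (decide (a ∈ A)) (decide (b ∈ A))
      (decide (x1 ∈ A)) (decide (x2 ∈ A)), ⟨?_, ?_, ?_, ?_⟩, ?_, ?_⟩
  · simp [gfun]
  · intro A _
    exact gfun_nonneg m al be t ht0.le htm hta htb _ _ _ _
  · intro A B hAB _
    have h := gfun_mono m al be t ht0.le htm hta htb (decide (a ∈ A))
      (decide (b ∈ A)) (decide (x1 ∈ A)) (decide (x2 ∈ A)) (decide (a ∈ B))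
      (decide (b ∈ B)) (decide (x1 ∈ B)) (decide (x2 ∈ B))
    rw [← decide_mem_of_subset hAB a, ← decide_mem_of_subset hAB b,
      ← decide_mem_of_subset hAB x1, ← decide_mem_of_subset hAB x2] at h
    exact h
  · intro A B _ _
    simp only [decide_mem_union, decide_mem_inter]
    exact gfun_submod m al be t ht0.le htm hta htb _ _ _ _ _ _ _ _
  · -- restriction to {a,b}
    intro A hA
    have hx1A : x1 ∉ A := fun h => hbx1 (by
      rcases mem_insert.mp (hA h) with h' | h'
      · exact absurd h'.symm hax1
      · exact (mem_singleton.mp h').symm)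
    have hx2A : x2 ∉ A := fun h => hbx2 (by
      rcases mem_insert.mp (hA h) with h' | h'
      · exact absurd h'.symm hax2
      · exact (mem_singleton.mp h').symm)
    by_cases haA : a ∈ A <;> by_cases hbA : b ∈ A
    · have : A = {a, b} := by
        apply Subset.antisymm hA
        intro e he
        rcases mem_insert.mp he with h' | h'
        · exact h' ▸ haA
        · exact (mem_singleton.mp h') ▸ hbA
      rw [this]
      simp [gfun, hab, hax1, hax2, hbx1, hbx2, h1', h2', h3', h4', hba, hfab]
    · have : A = {a} := by
        apply Subset.antisymm
        · intro e he
          rcases mem_insert.mp (hA he) with h' | h'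
          · exact mem_singleton.mpr h'
          · exact absurd ((mem_singleton.mp h') ▸ he) hbA
        · simp [haA]
      rw [this]
      simp [gfun, hab, hax1, hax2, h1', h2', h3', h4', hba, hfa]
    · have : A = {b} := by
        apply Subset.antisymm
        · intro e he
          rcases mem_insert.mp (hA he) with h' | h'
          · exact absurd (h' ▸ he) haA
          · exact mem_singleton.mpr (mem_singleton.mp h')
        · simp [hbA]
      rw [this]
      simp [gfun, hab, hbx1, hbx2, h1', h2', h3', h4', hba, hfb]
    · have : A = ∅ := by
        apply Subset.antisymm _ (empty_subset _)
        intro e he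
        rcases mem_insert.mp (hA he) with h' | h'
        · exact absurd (h' ▸ he) haA
        · exact absurd ((mem_singleton.mp h') ▸ he) hbA
      rw [this]
      simp [gfun, hf0]
  · -- Ingleton
    simp only [ingleton, pmi, union_empty]
    simp [gfun, hab, hax1, hax2, hbx1, hbx2, hx12, h1', h2', h3', h4', h5',
      hba]
    linarith
end
end
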